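/- arXiv:2504.16643 — 14 statements merged into one kernel-verified Lean document; each statement's English description precedes it below -/
import Mathlib

section
/- Let (R,P_Ω) be a multiple Rota-Baxter algebra of pair weight (λ_Ω,λ_Ω), and for each i in an index set I let A_i = (a_{i,ω})_{ω∈Ω} be a finitely supported family of elements of k. Define P_i := Σ_{ω∈Ω} a_{i,ω} P_ω and λ_i := Σ_{ω∈Ω} a_{i,ω} λ_ω. Then (R,(P_i)_{i∈I}) is a multiple Rota-Baxter algebra of pair weight (λ_I,λ_I), i.e., P_i(r₁)P_j(r₂) = P_i(r₁P_j(r₂)) + P_j(P_i(r₁)r₂) + λ_j P_i(r₁r₂) + λ_i P_j(r₁r₂) for all r₁,r₂ ∈ R and i,j ∈ I. -/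
/-! For fixed `r₁ r₂ : R`, the failure of the pair-weight Rota–Baxter identity for two
operators-with-weight `(P, λ)` and `(P', λ')` is a `k`-bilinear function of these two pairs.
A bilinear map vanishing on all pairs of a family vanishes on all pairs from its span, and
`(P_i, λ_i)` is the `a_i`-linear combination of the `(P_ω, λ_ω)`. -/

namespace RotaBaxter

open Submodule

variable (k : Type*) {R : Type*} [CommRing k] [Ring R] [Algebra k R]

def pairWeightDefect (r₁ r₂ : R) :
    ((R →ₗ[k] R) × k) →ₗ[k] ((R →ₗ[k] R) × k) →ₗ[k] R :=
  LinearMap.mk₂ k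
    (fun x y => x.1 r₁ * y.1 r₂ -
      (x.1 (r₁ * y.1 r₂) + y.1 (x.1 r₁ * r₂) + y.2 • x.1 (r₁ * r₂) + x.2 • y.1 (r₁ * r₂)))
    (fun x x' y => by simp only [Prod.fst_add, Prod.snd_add, LinearMap.add_apply, add_mul,
      map_add, add_smul, smul_add]; abel)
    (fun c x y => by simp only [Prod.smul_fst, Prod.smul_snd, LinearMap.smul_apply,
      smul_mul_assoc, smul_eq_mul, map_smul, mul_smul, smul_sub, smul_add]; module)
    (fun x y y' => by simp only [Prod.fst_add, Prod.snd_add, LinearMap.add_apply, mul_add,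
      map_add, add_smul, smul_add]; abel)
    (fun c x y => by simp only [Prod.smul_fst, Prod.smul_snd, LinearMap.smul_apply,
      mul_smul_comm, smul_eq_mul, map_smul, mul_smul, smul_sub, smul_add]; module)

theorem pairWeightDefect_eq_zero_iff (x y : (R →ₗ[k] R) × k) (r₁ r₂ : R) :
    pairWeightDefect k r₁ r₂ x y = 0 ↔
      x.1 r₁ * y.1 r₂ =
        x.1 (r₁ * y.1 r₂) + y.1 (x.1 r₁ * r₂) + y.2 • x.1 (r₁ * r₂) + x.2 • y.1 (r₁ * r₂) :=
  sub_eq_zero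

theorem pairWeightDefect_eq_zero_of_mem_span {Ω : Type*} {v : Ω → (R →ₗ[k] R) × k}
    (hv : ∀ α β r₁ r₂, pairWeightDefect k r₁ r₂ (v α) (v β) = 0)
    {x y : (R →ₗ[k] R) × k} (hx : x ∈ span k (Set.range v)) (hy : y ∈ span k (Set.range v))
    (r₁ r₂ : R) : pairWeightDefect k r₁ r₂ x y = 0 :=
  (mem_bot k).1 <| LinearMap.BilinMap.apply_apply_mem_of_mem_span ⊥ _ _ _
    (by rintro _ ⟨α, rfl⟩ _ ⟨β, rfl⟩; exact (mem_bot k).2 (hv α β r₁ r₂)) x y hx hy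

end RotaBaxter

open RotaBaxter in
theorem linear_combination_multiple_rota_baxter_algebra_general
    (k : Type*) [CommRing k]
    (R : Type*) [Ring R] [Algebra k R]
    (Ω : Type*)
    (lam : Ω → k)
    (P : Ω → R →ₗ[k] R)
    (hP : ∀ (α β : Ω) (r₁ r₂ : R),
      P α r₁ * P β r₂ =
        P α (r₁ * P β r₂) + P β (P α r₁ * r₂)
          + lam β • P α (r₁ * r₂) + lam α • P β (r₁ * r₂))
    (I : Type*)
    (a : I → Ω →₀ k)
    (Q : I → R →ₗ[k] R) (μ : I → k)
    (hQ : ∀ i : I, Q i = (a i).sum fun ω c => c • P ω)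
    (hμ : ∀ i : I, μ i = (a i).sum fun ω c => c * lam ω) :
    ∀ (i j : I) (r₁ r₂ : R),
      Q i r₁ * Q j r₂ =
        Q i (r₁ * Q j r₂) + Q j (Q i r₁ * r₂)
          + μ j • Q i (r₁ * r₂) + μ i • Q j (r₁ * r₂) := by
  have hQμ (i : I) : (Q i, μ i) ∈ Submodule.span k (Set.range fun ω => (P ω, lam ω)) := by
    refine Finsupp.mem_span_range_iff_exists_finsupp.2 ⟨a i, Prod.ext ?_ ?_⟩ <;>
      simp [hQ, hμ, Finsupp.sum, Prod.fst_sum, Prod.snd_sum]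
  intro i j r₁ r₂
  exact (pairWeightDefect_eq_zero_iff k (Q i, μ i) (Q j, μ j) r₁ r₂).1 <|
    pairWeightDefect_eq_zero_of_mem_span k
      (fun α β r₁ r₂ => (pairWeightDefect_eq_zero_iff k _ _ r₁ r₂).2 (hP α β r₁ r₂))
      (hQμ i) (hQμ j) r₁ r₂

/-- Finitely supported linear combinations of the operators of a
multiple Rota-Baxter algebra again form a multiple Rota-Baxter algebra, with the
correspondingly combined weights. -/
theorem linear_combination_multiple_rota_baxter_algebra
    (k : Type*) [CommRing k]
    (R : Type*) [Ring R] [Algebra k R]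
    (Ω : Type*) [Nonempty Ω]
    (lam : Ω → k)
    (P : Ω → R →ₗ[k] R)
    (hP : ∀ (α β : Ω) (r₁ r₂ : R),
      P α r₁ * P β r₂ =
        P α (r₁ * P β r₂) + P β (P α r₁ * r₂)
          + lam β • P α (r₁ * r₂) + lam α • P β (r₁ * r₂))
    (I : Type*)
    (a : I → Ω →₀ k)
    (Q : I → R →ₗ[k] R) (μ : I → k)
    (hQ : ∀ i : I, Q i = (a i).sum fun ω c => c • P ω)
    (hμ : ∀ i : I, μ i = (a i).sum fun ω c => c * lam ω) :
    ∀ (i j : I) (r₁ r₂ : R),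
      Q i r₁ * Q j r₂ =
        Q i (r₁ * Q j r₂) + Q j (Q i r₁ * r₂)
          + μ j • Q i (r₁ * r₂) + μ i • Q j (r₁ * r₂) :=
  linear_combination_multiple_rota_baxter_algebra_general k R Ω lam P hP I a Q μ hQ hμ
end

section
/- Let (M,𝔪_Ω) be a left (R,P_Ω)-module, and for each i in an index set I let A_i = (a_{i,ω})_{ω∈Ω} be a finitely supported family of elements of k. Define P_i := Σ_{ω∈Ω} a_{i,ω} P_ω, 𝔪̄_i := Σ_{ω∈Ω} a_{i,ω} 𝔪_ω, and λ_i := Σ_{ω∈Ω} a_{i,ω} λ_ω. Then (M,(𝔪̄_i)_{i∈I}) is a left (R,(P_i)_{i∈I})-module of pair weight (λ_I,λ_I): for all x ∈ R, m ∈ M and i,j ∈ I, P_i(x)𝔪̄_j(m) = 𝔪̄_i(x𝔪̄_j(m)) + 𝔪̄_j(P_i(x)m) + λ_j 𝔪̄_i(xm) + λ_i 𝔪̄_j(xm). -/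
/-!
The identity `P_α(x) 𝔪_β(m) = 𝔪_α(x 𝔪_β(m)) + 𝔪_β(P_α(x) m) + λ_β 𝔪_α(x m) + λ_α 𝔪_β(x m)`
involves only the data `(P_α, 𝔪_α, λ_α)` of `α` and `(𝔪_β, λ_β)` of `β`, and the difference of
its two sides is `k`-bilinear in these two tuples. A bilinear map that vanishes on two
generating families vanishes on all their linear combinations, which are exactly the tuples
`(P_i, 𝔪̄_i, λ_i)` and `(𝔪̄_j, λ_j)`.
-/

section

variable (k : Type*) [CommRing k] (R : Type*) [Ring R] [Algebra k R]
  (M : Type*) [AddCommGroup M] [Module k M] [Module R M] [IsScalarTower k R M]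

def rotaBaxterModuleDefect :
    ((R →ₗ[k] R) × (M →ₗ[k] M) × k) →ₗ[k] ((M →ₗ[k] M) × k) →ₗ[k] R → M → M :=
  LinearMap.mk₂ k
    (fun t s x m => t.1 x • s.1 m -
      (t.2.1 (x • s.1 m) + s.1 (t.1 x • m) + s.2 • t.2.1 (x • m) + t.2.2 • s.1 (x • m)))
    (fun t t' s => by
      ext x m
      simp only [Prod.fst_add, Prod.snd_add, LinearMap.add_apply, Pi.add_apply, add_smul,
        map_add, smul_add]
      abel)
    (fun c t s => by
      ext x m
      simp only [Prod.smul_fst, Prod.smul_snd, LinearMap.smul_apply, Pi.smul_apply, smul_assoc,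
        smul_sub, smul_add, smul_comm s.2 c, map_smul])
    (fun t s s' => by
      ext x m
      simp only [Prod.fst_add, Prod.snd_add, LinearMap.add_apply, Pi.add_apply, add_smul,
        map_add, smul_add]
      abel)
    (fun c t s => by
      ext x m
      simp only [Prod.smul_fst, Prod.smul_snd, LinearMap.smul_apply, Pi.smul_apply, smul_assoc,
        smul_sub, smul_add, smul_comm x c, smul_comm (t.1 x) c, smul_comm t.2.2 c, map_smul])

theorem rotaBaxterModuleDefect_apply (t : (R →ₗ[k] R) × (M →ₗ[k] M) × k)
    (s : (M →ₗ[k] M) × k) (x : R) (m : M) :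
    rotaBaxterModuleDefect k R M t s x m = t.1 x • s.1 m -
      (t.2.1 (x • s.1 m) + s.1 (t.1 x • m) + s.2 • t.2.1 (x • m) + t.2.2 • s.1 (x • m)) := rfl

end

theorem LinearMap.map_finsuppSum_smul₂_eq_zero {k E F G Ω : Type*} [CommRing k]
    [AddCommGroup E] [Module k E] [AddCommGroup F] [Module k F] [AddCommGroup G] [Module k G]
    (B : E →ₗ[k] F →ₗ[k] G) {t : Ω → E} {s : Ω → F} (h : ∀ α β, B (t α) (s β) = 0)
    (a b : Ω →₀ k) :
    B (a.sum fun ω c => c • t ω) (b.sum fun ω c => c • s ω) = 0 := by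
  simp [map_finsuppSum, LinearMap.finsupp_sum_apply, h]

theorem linear_combination_multiple_rota_baxter_module_general
    (k : Type*) [CommRing k]
    (R : Type*) [Ring R] [Algebra k R]
    (Ω : Type*)
    (lam : Ω → k)
    (P : Ω → R →ₗ[k] R)
    (M : Type*) [AddCommGroup M] [Module k M] [Module R M] [IsScalarTower k R M]
    (mOp : Ω → M →ₗ[k] M)
    (hM : ∀ (α β : Ω) (x : R) (m : M),
      P α x • mOp β m =
        mOp α (x • mOp β m) + mOp β (P α x • m)
          + lam β • mOp α (x • m) + lam α • mOp β (x • m))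
    (I : Type*)
    (a : I → Ω →₀ k)
    (Q : I → R →ₗ[k] R) (mbar : I → M →ₗ[k] M) (μ : I → k)
    (hQ : ∀ i : I, Q i = (a i).sum fun ω c => c • P ω)
    (hmbar : ∀ i : I, mbar i = (a i).sum fun ω c => c • mOp ω)
    (hμ : ∀ i : I, μ i = (a i).sum fun ω c => c * lam ω) :
    ∀ (i j : I) (x : R) (m : M),
      Q i x • mbar j m =
        mbar i (x • mbar j m) + mbar j (Q i x • m)
          + μ j • mbar i (x • m) + μ i • mbar j (x • m) := by
  intro i j x m
  have hdefect : ∀ α β, rotaBaxterModuleDefect k R M (P α, mOp α, lam α) (mOp β, lam β) = 0 :=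
    fun α β => funext₂ fun x m => sub_eq_zero.2 (hM α β x m)
  have hleft : ((a i).sum fun ω c => c • (P ω, mOp ω, lam ω)) = (Q i, mbar i, μ i) := by
    simp only [hQ, hmbar, hμ, Finsupp.sum, Prod.ext_iff, Prod.fst_sum, Prod.snd_sum,
      Prod.smul_fst, Prod.smul_snd, smul_eq_mul, and_self]
  have hright : ((a j).sum fun ω c => c • (mOp ω, lam ω)) = (mbar j, μ j) := by
    simp only [hmbar, hμ, Finsupp.sum, Prod.ext_iff, Prod.fst_sum, Prod.snd_sum,
      Prod.smul_fst, Prod.smul_snd, smul_eq_mul, and_self]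
  have hzero := congrFun₂ ((rotaBaxterModuleDefect k R M).map_finsuppSum_smul₂_eq_zero hdefect
    (a i) (a j)) x m
  rwa [hleft, hright, rotaBaxterModuleDefect_apply, Pi.zero_apply, Pi.zero_apply,
    sub_eq_zero] at hzero

/-- Finitely supported linear combinations of the operators of a
left multiple Rota-Baxter module again form a left multiple Rota-Baxter module over
the correspondingly combined multiple Rota-Baxter algebra. -/
theorem linear_combination_multiple_rota_baxter_module
    (k : Type*) [CommRing k]
    (R : Type*) [Ring R] [Algebra k R]
    (Ω : Type*) [Nonempty Ω]
    (lam : Ω → k)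
    (P : Ω → R →ₗ[k] R)
    (hP : ∀ (α β : Ω) (r₁ r₂ : R),
      P α r₁ * P β r₂ =
        P α (r₁ * P β r₂) + P β (P α r₁ * r₂)
          + lam β • P α (r₁ * r₂) + lam α • P β (r₁ * r₂))
    (M : Type*) [AddCommGroup M] [Module k M] [Module R M] [IsScalarTower k R M]
    (mOp : Ω → M →ₗ[k] M)
    (hM : ∀ (α β : Ω) (x : R) (m : M),
      P α x • mOp β m =
        mOp α (x • mOp β m) + mOp β (P α x • m)
          + lam β • mOp α (x • m) + lam α • mOp β (x • m))
    (I : Type*)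
    (a : I → Ω →₀ k)
    (Q : I → R →ₗ[k] R) (mbar : I → M →ₗ[k] M) (μ : I → k)
    (hQ : ∀ i : I, Q i = (a i).sum fun ω c => c • P ω)
    (hmbar : ∀ i : I, mbar i = (a i).sum fun ω c => c • mOp ω)
    (hμ : ∀ i : I, μ i = (a i).sum fun ω c => c * lam ω) :
    ∀ (i j : I) (x : R) (m : M),
      Q i x • mbar j m =
        mbar i (x • mbar j m) + mbar j (Q i x • m)
          + μ j • mbar i (x • m) + μ i • mbar j (x • m) :=
  linear_combination_multiple_rota_baxter_module_general k R Ω lam P M mOp hM I a Q mbar μ hQ hmbar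
    hμ
end

section
/- Let (R,Ω) be an Ω-operated algebra and X a set. Then there exists a free left Ω-operated module on X: a left Ω-operated module (M,(𝔪_ω)_{ω∈Ω}) together with a map j_X : X → M such that for every left Ω-operated module (N,(𝔫_ω)_{ω∈Ω}) and every set map f : X → N there is a unique left Ω-operated module homomorphism f̄ : M → N with f̄ ∘ j_X = f. -/
universe u

/-- A left Ω-operated module over a `k`-algebra `R`: a left `R`-module (which is also a
`k`-module compatibly) equipped with a family of `k`-linear operators indexed by `Ω`
(no axioms imposed). -/
structure OperatedModule (k R Ω : Type u) [CommRing k] [Ring R] [Algebra k R] :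
    Type (u + 1) where
  carrier : Type u
  [isAddCommGroup : AddCommGroup carrier]
  [isModulek : Module k carrier]
  [isModuleR : Module R carrier]
  [isTower : IsScalarTower k R carrier]
  op : Ω → carrier →ₗ[k] carrier

attribute [instance] OperatedModule.isAddCommGroup OperatedModule.isModulek
  OperatedModule.isModuleR OperatedModule.isTower


section Aux

variable (k R Ω : Type u) [CommRing k] [Ring R] [Algebra k R]

/-- Relations making the inclusion of `R` into the free algebra on `R ⊕ Ω` a `k`-algebra map. -/
inductive OpRel : FreeAlgebra k (R ⊕ Ω) → FreeAlgebra k (R ⊕ Ω) → Prop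
  | mul (r s : R) : OpRel (FreeAlgebra.ι k (.inl (r * s)))
      (FreeAlgebra.ι k (.inl r) * FreeAlgebra.ι k (.inl s))
  | one : OpRel (FreeAlgebra.ι k (.inl 1)) 1
  | add (r s : R) : OpRel (FreeAlgebra.ι k (.inl (r + s)))
      (FreeAlgebra.ι k (.inl r) + FreeAlgebra.ι k (.inl s))
  | smul (c : k) (r : R) : OpRel (FreeAlgebra.ι k (.inl (c • r)))
      (c • FreeAlgebra.ι k (.inl r))

/-- The "free product" algebra. -/
abbrev OpAlg : Type u := RingQuot (OpRel k R Ω)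

noncomputable def opRho : R →+* OpAlg k R Ω where
  toFun r := RingQuot.mkAlgHom k (OpRel k R Ω) (FreeAlgebra.ι k (.inl r))
  map_one' := by
    show RingQuot.mkAlgHom k (OpRel k R Ω) _ = _
    rw [RingQuot.mkAlgHom_rel k OpRel.one, map_one]
  map_mul' r s := by
    show RingQuot.mkAlgHom k (OpRel k R Ω) _ = _ * _
    rw [RingQuot.mkAlgHom_rel k (OpRel.mul r s), map_mul]
  map_zero' := by
    show RingQuot.mkAlgHom k (OpRel k R Ω) _ = _
    have : (0 : R) = (0 : k) • (0 : R) := by simp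
    rw [this, RingQuot.mkAlgHom_rel k (OpRel.smul 0 0), zero_smul, map_zero]
  map_add' r s := by
    show RingQuot.mkAlgHom k (OpRel k R Ω) _ = _ + _
    rw [RingQuot.mkAlgHom_rel k (OpRel.add r s), map_add]

lemma opRho_smul (c : k) (r : R) : opRho k R Ω (c • r) = c • opRho k R Ω r := by
  show RingQuot.mkAlgHom k (OpRel k R Ω) _ = _
  rw [RingQuot.mkAlgHom_rel k (OpRel.smul c r), map_smul]
  rfl

noncomputable def opGen (ω : Ω) : OpAlg k R Ω :=
  RingQuot.mkAlgHom k (OpRel k R Ω) (FreeAlgebra.ι k (.inr ω))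

noncomputable instance opAlgModuleR : Module R (OpAlg k R Ω) :=
  Module.compHom (OpAlg k R Ω) (opRho k R Ω)

lemma opAlg_smul_def (r : R) (a : OpAlg k R Ω) : r • a = opRho k R Ω r * a := rfl

instance opAlgTower : IsScalarTower k R (OpAlg k R Ω) :=
  ⟨fun c r a => by
    rw [opAlg_smul_def, opAlg_smul_def, opRho_smul, smul_mul_assoc]⟩

end Aux

section Main

variable {k R Ω : Type u} [CommRing k] [Ring R] [Algebra k R]

variable (N : OperatedModule k R Ω)

/-- Action map into endomorphisms of an operated module. -/
noncomputable def opPsi : OpAlg k R Ω →ₐ[k] Module.End k N.carrier :=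
  RingQuot.liftAlgHom k
    ⟨FreeAlgebra.lift k (Sum.elim
        (fun r => Module.toModuleEnd k N.carrier r)
        (fun ω => N.op ω)), by
      intro x y h
      induction h with
      | mul r s =>
        simp only [FreeAlgebra.lift_ι_apply, map_mul, Sum.elim_inl]
      | one =>
        simp only [FreeAlgebra.lift_ι_apply, map_one, Sum.elim_inl]
      | add r s =>
        simp only [FreeAlgebra.lift_ι_apply, map_add, Sum.elim_inl]
      | smul c r =>
        simp only [FreeAlgebra.lift_ι_apply, map_smul, Sum.elim_inl]
        ext n
        exact smul_assoc c r n⟩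

lemma opPsi_rho (r : R) (n : N.carrier) :
    opPsi N (opRho k R Ω r) n = r • n := by
  show opPsi N (RingQuot.mkAlgHom k (OpRel k R Ω) (FreeAlgebra.ι k (.inl r))) n = r • n
  rw [opPsi, RingQuot.liftAlgHom_mkAlgHom_apply, FreeAlgebra.lift_ι_apply]
  rfl

lemma opPsi_gen (ω : Ω) : opPsi N (opGen k R Ω ω) = N.op ω := by
  rw [opPsi, opGen, RingQuot.liftAlgHom_mkAlgHom_apply, FreeAlgebra.lift_ι_apply]
  rfl

end Main

section Main2

variable {k R Ω : Type u} [CommRing k] [Ring R] [Algebra k R]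
variable (X : Type u)

/-- Left multiplication operator on the free module. -/
noncomputable def opLa (a : OpAlg k R Ω) :
    (X →₀ OpAlg k R Ω) →ₗ[k] (X →₀ OpAlg k R Ω) :=
  Finsupp.mapRange.linearMap (LinearMap.mulLeft k a)

lemma opLa_single (a b : OpAlg k R Ω) (x : X) :
    opLa X a (Finsupp.single x b) = Finsupp.single x (a * b) := by
  simp [opLa]

lemma opLa_rho (r : R) (v : X →₀ OpAlg k R Ω) :
    opLa X (opRho k R Ω r) v = r • v := by
  ext x
  simp [opLa, opAlg_smul_def]

lemma opLa_algebraMap (c : k) (v : X →₀ OpAlg k R Ω) :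
    opLa X (algebraMap k (OpAlg k R Ω) c) v = c • v := by
  ext x
  simp [opLa, Algebra.smul_def]

lemma opLa_mul (a b : OpAlg k R Ω) (v : X →₀ OpAlg k R Ω) :
    opLa X (a * b) v = opLa X a (opLa X b v) := by
  ext x
  simp [opLa, mul_assoc]

lemma opLa_add (a b : OpAlg k R Ω) (v : X →₀ OpAlg k R Ω) :
    opLa X (a + b) v = opLa X a v + opLa X b v := by
  ext x
  simp [opLa, add_mul]

/-- The free operated module on `X`. -/
noncomputable def opM : OperatedModule k R Ω where
  carrier := X →₀ OpAlg k R Ω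
  op ω := opLa X (opGen k R Ω ω)

variable {X}

lemma key_lemma (N : OperatedModule k R Ω)
    (φ' : (X →₀ OpAlg k R Ω) →ₗ[R] N.carrier)
    (h1 : ∀ (ω : Ω) (m : X →₀ OpAlg k R Ω),
      φ' (opLa X (opGen k R Ω ω) m) = N.op ω (φ' m)) :
    ∀ (a : OpAlg k R Ω) (v : X →₀ OpAlg k R Ω),
      φ' (opLa X a v) = opPsi N a (φ' v) := by
  intro a
  obtain ⟨u, rfl⟩ := RingQuot.mkAlgHom_surjective k (OpRel k R Ω) a
  induction u using FreeAlgebra.induction with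
  | grade0 c =>
    intro v
    rw [AlgHom.commutes, opLa_algebraMap, AlgHom.commutes,
      Module.algebraMap_end_apply]
    rw [← algebraMap_smul R c v, map_smul, algebraMap_smul]
  | grade1 y =>
    cases y with
    | inl r =>
      intro v
      show φ' (opLa X (opRho k R Ω r) v) = opPsi N (opRho k R Ω r) (φ' v)
      rw [opLa_rho, map_smul, opPsi_rho]
    | inr ω =>
      intro v
      show φ' (opLa X (opGen k R Ω ω) v) = opPsi N (opGen k R Ω ω) (φ' v)
      rw [h1, opPsi_gen]
  | mul a b ha hb =>
    intro v
    rw [map_mul, opLa_mul, ha, hb, map_mul]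
    rfl
  | add a b ha hb =>
    intro v
    rw [map_add, opLa_add, map_add, ha, hb, map_add]
    rfl

end Main2

/-- Let `(R, T)` be an `Ω`-operated algebra and `X` a set. Then the free
left `Ω`-operated module on `X` exists: there are a left `Ω`-operated module `M` and a map
`j : X → M` such that every set map from `X` into a left `Ω`-operated module `N` factors
uniquely through `j` via a left `Ω`-operated module homomorphism. -/
theorem exists_free_operated_module
    (k R Ω X : Type u) [CommRing k] [Ring R] [Algebra k R] [Nonempty Ω]
    (T : Ω → R →ₗ[k] R) :
    ∃ (M : OperatedModule k R Ω) (j : X → M.carrier),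
      ∀ (N : OperatedModule k R Ω) (f : X → N.carrier),
        ∃! φ : M.carrier →ₗ[R] N.carrier,
          (∀ (ω : Ω) (m : M.carrier), φ (M.op ω m) = N.op ω (φ m)) ∧
          ∀ x : X, φ (j x) = f x := by
  classical
  refine ⟨opM X, fun x => Finsupp.single x 1, ?_⟩
  intro N f
  let B : X → (OpAlg k R Ω →ₗ[k] N.carrier) := fun x =>
    { toFun := fun a => opPsi N a (f x)
      map_add' := by intro a b; simp
      map_smul' := by intro c a; simp }
  let φ₀ : (X →₀ OpAlg k R Ω) →ₗ[k] N.carrier := Finsupp.lsum k B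
  have hsingle : ∀ (x : X) (a : OpAlg k R Ω),
      φ₀ (Finsupp.single x a) = opPsi N a (f x) := by
    intro x a
    simp [φ₀, B]
  have hop : ∀ (ω : Ω) (v : X →₀ OpAlg k R Ω),
      φ₀ (opLa X (opGen k R Ω ω) v) = N.op ω (φ₀ v) := by
    intro ω v
    induction v using Finsupp.induction_linear with
    | zero => simp
    | add v w hv hw => rw [map_add, map_add, hv, hw, map_add, map_add]
    | single x a =>
      rw [opLa_single, hsingle, hsingle, map_mul, opPsi_gen]
      rfl
  have hsm : ∀ (r : R) (v : X →₀ OpAlg k R Ω), φ₀ (r • v) = r • φ₀ v := by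
    intro r v
    induction v using Finsupp.induction_linear with
    | zero => simp
    | add v w hv hw => rw [smul_add, map_add, hv, hw, map_add, smul_add]
    | single x a =>
      rw [Finsupp.smul_single, hsingle, hsingle, opAlg_smul_def, map_mul]
      exact opPsi_rho N r _
  let φ : (X →₀ OpAlg k R Ω) →ₗ[R] N.carrier :=
    { toFun := φ₀
      map_add' := map_add φ₀
      map_smul' := hsm }
  refine ⟨φ, ⟨fun ω m => hop ω m, fun x => ?_⟩, ?_⟩
  · show φ₀ (Finsupp.single x 1) = f x
    rw [hsingle, map_one]
    rfl
  · rintro φ' ⟨h1, h2⟩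
    apply Finsupp.lhom_ext
    intro x a
    have hk := key_lemma N φ' h1 a (Finsupp.single x 1)
    rw [opLa_single, mul_one] at hk
    rw [hk]
    refine (congrArg (opPsi N a) (h2 x)).trans ?_
    exact (hsingle x a).symm
end

section
/- Let (R,P_Ω) be a multiple Rota-Baxter algebra of pair weight (λ_Ω,λ_Ω) and X a set. Then there exists a free left (R,P_Ω)-module on X: a left (R,P_Ω)-module (F,𝔭_Ω) together with a map j : X → F such that for every left (R,P_Ω)-module (M,𝔪_Ω) and every set map φ : X → M there is a unique left (R,P_Ω)-module homomorphism φ̃ : F → M with φ̃ ∘ j = φ. -/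
/-!
The free module is the term model. Take all formal expressions built from `X` by `0`, `+`, `-`,
left multiplication by elements of `R` and the operators `ω ∈ Ω`, and identify two expressions
when one is obtained from the other by rewriting, inside some context, along an instance of the
module axioms, of the `k`-linearity of the operators, or of the Rota-Baxter module identity.
Interpreting expressions in any left `(R, P_Ω)`-module respects every such rewrite, which gives
the lift; any two homomorphisms agreeing on `X` agree on every expression by induction on it.
-/

universe u

/-- A left multiple Rota-Baxter module `(M, 𝔪_Ω)` over a multiple Rota-Baxter algebra
`(R, P_Ω)` of pair weight `(λ_Ω, λ_Ω)`: a left `R`-module (and `k`-module, compatibly)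
with a family of `k`-linear operators satisfying the multiple Rota-Baxter module
identity. -/
structure MRBModule (k R Ω : Type u) [CommRing k] [Ring R] [Algebra k R]
    (lam : Ω → k) (P : Ω → R →ₗ[k] R) : Type (u + 1) where
  carrier : Type u
  [isAddCommGroup : AddCommGroup carrier]
  [isModulek : Module k carrier]
  [isModuleR : Module R carrier]
  [isTower : IsScalarTower k R carrier]
  op : Ω → carrier →ₗ[k] carrier
  rb : ∀ (α β : Ω) (x : R) (m : carrier),
    P α x • op β m =
      op α (x • op β m) + op β (P α x • m)
        + lam β • op α (x • m) + lam α • op β (x • m)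

attribute [instance] MRBModule.isAddCommGroup MRBModule.isModulek
  MRBModule.isModuleR MRBModule.isTower

namespace FreeMRBModule

inductive Term (R Ω X : Type u) : Type u
  | of : X → Term R Ω X
  | zero : Term R Ω X
  | add : Term R Ω X → Term R Ω X → Term R Ω X
  | neg : Term R Ω X → Term R Ω X
  | smul : R → Term R Ω X → Term R Ω X
  | op : Ω → Term R Ω X → Term R Ω X

variable {k R Ω X : Type u} [CommRing k] [Ring R] [Algebra k R]

/-- A single rewriting step inside a context; `Quot` supplies the equivalence closure. -/
inductive Rel (lam : Ω → k) (P : Ω → R →ₗ[k] R) : Term R Ω X → Term R Ω X → Prop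
  | add_left {a b} (c : Term R Ω X) : Rel lam P a b → Rel lam P (a.add c) (b.add c)
  | add_right (a : Term R Ω X) {b c} : Rel lam P b c → Rel lam P (a.add b) (a.add c)
  | neg {a b} : Rel lam P a b → Rel lam P a.neg b.neg
  | smul (r : R) {a b} : Rel lam P a b → Rel lam P (a.smul r) (b.smul r)
  | op (ω : Ω) {a b} : Rel lam P a b → Rel lam P (a.op ω) (b.op ω)
  | add_assoc (a b c : Term R Ω X) : Rel lam P ((a.add b).add c) (a.add (b.add c))
  | zero_add (a : Term R Ω X) : Rel lam P (Term.zero.add a) a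
  | neg_add_cancel (a : Term R Ω X) : Rel lam P (a.neg.add a) Term.zero
  | add_comm (a b : Term R Ω X) : Rel lam P (a.add b) (b.add a)
  | smul_add (r : R) (a b : Term R Ω X) : Rel lam P ((a.add b).smul r) ((a.smul r).add (b.smul r))
  | add_smul (r s : R) (a : Term R Ω X) : Rel lam P (a.smul (r + s)) ((a.smul r).add (a.smul s))
  | mul_smul (r s : R) (a : Term R Ω X) : Rel lam P (a.smul (r * s)) ((a.smul s).smul r)
  | one_smul (a : Term R Ω X) : Rel lam P (a.smul 1) a
  | op_add (ω : Ω) (a b : Term R Ω X) : Rel lam P ((a.add b).op ω) ((a.op ω).add (b.op ω))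
  | op_smul (ω : Ω) (c : k) (a : Term R Ω X) :
      Rel lam P ((a.smul (algebraMap k R c)).op ω) ((a.op ω).smul (algebraMap k R c))
  | rb (α β : Ω) (x : R) (a : Term R Ω X) :
      Rel lam P ((a.op β).smul (P α x))
        (((((a.op β).smul x).op α).add ((a.smul (P α x)).op β)
          |>.add (((a.smul x).op α).smul (algebraMap k R (lam β))))
          |>.add (((a.smul x).op β).smul (algebraMap k R (lam α))))

end FreeMRBModule

def FreeMRBModule {k R Ω : Type u} [CommRing k] [Ring R] [Algebra k R]
    (lam : Ω → k) (P : Ω → R →ₗ[k] R) (X : Type u) : Type u :=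
  Quot (FreeMRBModule.Rel (X := X) lam P)

namespace FreeMRBModule

variable {k R Ω : Type u} [CommRing k] [Ring R] [Algebra k R]
variable {lam : Ω → k} {P : Ω → R →ₗ[k] R} {X : Type u}

def mk : Term R Ω X → FreeMRBModule lam P X := Quot.mk _

theorem sound {a b : Term R Ω X} (h : Rel lam P a b) : (mk a : FreeMRBModule lam P X) = mk b :=
  Quot.sound h

@[elab_as_elim]
theorem ind {p : FreeMRBModule lam P X → Prop} (h : ∀ a, p (mk a)) (m : FreeMRBModule lam P X) :
    p m :=
  Quot.ind h m

def of (x : X) : FreeMRBModule lam P X := mk (.of x)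

instance : Zero (FreeMRBModule lam P X) := ⟨mk .zero⟩

instance : Add (FreeMRBModule lam P X) :=
  ⟨Quot.map₂ Term.add (fun a _ _ => Rel.add_right a) (fun _ _ c => Rel.add_left c)⟩

instance : Neg (FreeMRBModule lam P X) := ⟨Quot.map Term.neg fun _ _ => Rel.neg⟩

instance : SMul R (FreeMRBModule lam P X) :=
  ⟨fun r => Quot.map (Term.smul r) fun _ _ => Rel.smul r⟩

theorem mk_add (a b : Term R Ω X) :
    (mk (a.add b) : FreeMRBModule lam P X) = mk a + mk b := rfl

theorem mk_neg (a : Term R Ω X) : (mk a.neg : FreeMRBModule lam P X) = -mk a := rfl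

theorem mk_smul (r : R) (a : Term R Ω X) :
    (mk (a.smul r) : FreeMRBModule lam P X) = r • mk a := rfl

instance : AddCommGroup (FreeMRBModule lam P X) :=
  { AddGroup.ofLeftAxioms
      (fun a b c => by
        induction a using ind; induction b using ind; induction c using ind
        exact sound (Rel.add_assoc _ _ _))
      (ind fun a => sound (Rel.zero_add a))
      (ind fun a => sound (Rel.neg_add_cancel a)) with
    add_comm := fun a b => by
      induction a using ind; induction b using ind
      exact sound (Rel.add_comm _ _) }

instance : Module R (FreeMRBModule lam P X) :=
  Module.ofMinimalAxioms
    (fun r a b => by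
      induction a using ind; induction b using ind
      exact sound (Rel.smul_add _ _ _))
    (fun r s => ind fun a => sound (Rel.add_smul r s a))
    (fun r s => ind fun a => sound (Rel.mul_smul r s a))
    (ind fun a => sound (Rel.one_smul a))

instance : Module k (FreeMRBModule lam P X) := Module.compHom _ (algebraMap k R)

instance : IsScalarTower k R (FreeMRBModule lam P X) :=
  ⟨fun c r m => show (c • r) • m = algebraMap k R c • r • m by
    rw [Algebra.smul_def, mul_smul]⟩

def op (ω : Ω) : FreeMRBModule lam P X →ₗ[k] FreeMRBModule lam P X where
  toFun := Quot.map (Term.op ω) fun _ _ => Rel.op ω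
  map_add' a b := by
    induction a using ind; induction b using ind
    exact sound (Rel.op_add _ _ _)
  map_smul' c := ind fun a => sound (Rel.op_smul ω c a)

theorem mk_op (ω : Ω) (a : Term R Ω X) :
    (mk (a.op ω) : FreeMRBModule lam P X) = op ω (mk a) := rfl

theorem op_rb (α β : Ω) (x : R) (m : FreeMRBModule lam P X) :
    P α x • op β m =
      op α (x • op β m) + op β (P α x • m)
        + lam β • op α (x • m) + lam α • op β (x • m) :=
  ind (fun a => sound (Rel.rb α β x a)) m

variable (lam P X) in
def mrbModule : MRBModule k R Ω lam P where
  carrier := FreeMRBModule lam P X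
  op := op
  rb := op_rb

section Lift

variable (M : MRBModule k R Ω lam P) (φ : X → M.carrier)

def eval : Term R Ω X → M.carrier
  | .of x => φ x
  | .zero => 0
  | .add a b => eval a + eval b
  | .neg a => -eval a
  | .smul r a => r • eval a
  | .op ω a => M.op ω (eval a)

theorem eval_eq_of_rel {a b : Term R Ω X} (h : Rel lam P a b) : eval M φ a = eval M φ b := by
  induction h with
  | add_left _ _ ih | add_right _ _ ih | neg _ ih | smul _ _ ih | op _ _ ih =>
    simp only [eval, ih]
  | add_assoc => exact add_assoc ..
  | zero_add => exact zero_add _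
  | neg_add_cancel => exact neg_add_cancel _
  | add_comm => exact add_comm ..
  | smul_add => exact smul_add ..
  | add_smul => exact add_smul ..
  | mul_smul => exact mul_smul ..
  | one_smul => exact one_smul ..
  | op_add => exact map_add ..
  | op_smul ω c a => simp only [eval, algebraMap_smul, map_smul]
  | rb α β x a => simp only [eval, algebraMap_smul, M.rb]

def lift : FreeMRBModule lam P X →ₗ[R] M.carrier where
  toFun := Quot.lift (eval M φ) fun _ _ => eval_eq_of_rel M φ
  map_add' a b := by induction a using ind; induction b using ind; rfl
  map_smul' r := ind fun _ => rfl

theorem lift_of (x : X) : lift M φ (of x) = φ x := rfl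

theorem lift_op (ω : Ω) (m : FreeMRBModule lam P X) :
    lift M φ (op ω m) = M.op ω (lift M φ m) :=
  ind (fun _ => rfl) m

theorem lift_unique (ψ : FreeMRBModule lam P X →ₗ[R] M.carrier)
    (hop : ∀ ω m, ψ (op ω m) = M.op ω (ψ m)) (hof : ∀ x, ψ (of x) = φ x) :
    ψ = lift M φ := by
  ext m
  induction m using ind with | _ a
  induction a with
  | of x => exact hof x
  | zero => exact (map_zero ψ).trans (map_zero (lift M φ)).symm
  | add a b iha ihb => rw [mk_add, map_add, map_add, iha, ihb]
  | neg a ih => rw [mk_neg, map_neg, map_neg, ih]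
  | smul r a ih => rw [mk_smul, map_smul, map_smul, ih]
  | op ω a ih => rw [mk_op, hop, lift_op, ih]

end Lift

end FreeMRBModule

theorem exists_free_multiple_rota_baxter_module_general
    (k R Ω X : Type u) [CommRing k] [Ring R] [Algebra k R]
    (lam : Ω → k)
    (P : Ω → R →ₗ[k] R) :
    ∃ (F : MRBModule k R Ω lam P) (j : X → F.carrier),
      ∀ (M : MRBModule k R Ω lam P) (φ : X → M.carrier),
        ∃! φt : F.carrier →ₗ[R] M.carrier,
          (∀ (ω : Ω) (u : F.carrier), φt (F.op ω u) = M.op ω (φt u)) ∧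
          ∀ x : X, φt (j x) = φ x :=
  ⟨FreeMRBModule.mrbModule lam P X, FreeMRBModule.of, fun M φ =>
    ⟨FreeMRBModule.lift M φ, ⟨FreeMRBModule.lift_op M φ, FreeMRBModule.lift_of M φ⟩,
      fun ψ ⟨hop, hof⟩ => FreeMRBModule.lift_unique M φ ψ hop hof⟩⟩

/-- Let `(R, P_Ω)` be a multiple Rota-Baxter algebra of pair weight
`(λ_Ω, λ_Ω)` and `X` a set. Then the free left `(R, P_Ω)`-module on `X` exists: a left
`(R, P_Ω)`-module `F` with a map `j : X → F` such that every set map from `X` into a left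
`(R, P_Ω)`-module factors uniquely through `j` via a left `(R, P_Ω)`-module
homomorphism. -/
theorem exists_free_multiple_rota_baxter_module
    (k R Ω X : Type u) [CommRing k] [Ring R] [Algebra k R] [Nonempty Ω]
    (lam : Ω → k)
    (P : Ω → R →ₗ[k] R)
    (hP : ∀ (α β : Ω) (r₁ r₂ : R),
      P α r₁ * P β r₂ =
        P α (r₁ * P β r₂) + P β (P α r₁ * r₂)
          + lam β • P α (r₁ * r₂) + lam α • P β (r₁ * r₂)) :
    ∃ (F : MRBModule k R Ω lam P) (j : X → F.carrier),
      ∀ (M : MRBModule k R Ω lam P) (φ : X → M.carrier),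
        ∃! φt : F.carrier →ₗ[R] M.carrier,
          (∀ (ω : Ω) (u : F.carrier), φt (F.op ω u) = M.op ω (φt u)) ∧
          ∀ x : X, φt (j x) = φ x :=
  exists_free_multiple_rota_baxter_module_general k R Ω X lam P
end

section
/- Every left (R,P_Ω)-module is isomorphic to a quotient of a free left (R,P_Ω)-module; more precisely, for every left (R,P_Ω)-module (M,𝔪_Ω) there exist a set X, a free left (R,P_Ω)-module (F,𝔭_Ω) on X with structure map j : X → F, and a surjective left (R,P_Ω)-module homomorphism F → M. -/
universe u

section Aux

variable (k R Ω : Type u) [CommRing k] [Ring R] [Algebra k R]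
  (lam : Ω → k) (P : Ω → R →ₗ[k] R)

/-- Relations defining the enveloping algebra of a multiple Rota-Baxter algebra
acting on modules. -/
inductive MRBRel : FreeAlgebra k (R ⊕ Ω) → FreeAlgebra k (R ⊕ Ω) → Prop
  | add (x y : R) : MRBRel (FreeAlgebra.ι k (.inl (x + y)))
      (FreeAlgebra.ι k (.inl x) + FreeAlgebra.ι k (.inl y))
  | mul (x y : R) : MRBRel (FreeAlgebra.ι k (.inl (x * y)))
      (FreeAlgebra.ι k (.inl x) * FreeAlgebra.ι k (.inl y))
  | one : MRBRel (FreeAlgebra.ι k (.inl 1)) 1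
  | smul (c : k) (x : R) : MRBRel (FreeAlgebra.ι k (.inl (c • x)))
      (c • FreeAlgebra.ι k (.inl x))
  | rb (α β : Ω) (x : R) : MRBRel
      (FreeAlgebra.ι k (.inl (P α x)) * FreeAlgebra.ι k (.inr β))
      (FreeAlgebra.ι k (.inr α) * FreeAlgebra.ι k (.inl x) * FreeAlgebra.ι k (.inr β)
        + FreeAlgebra.ι k (.inr β) * FreeAlgebra.ι k (.inl (P α x))
        + lam β • (FreeAlgebra.ι k (.inr α) * FreeAlgebra.ι k (.inl x))
        + lam α • (FreeAlgebra.ι k (.inr β) * FreeAlgebra.ι k (.inl x)))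

/-- The enveloping algebra. -/
abbrev MRBA : Type u := RingQuot (MRBRel k R Ω lam P)

noncomputable def MRBA.mk : FreeAlgebra k (R ⊕ Ω) →ₐ[k] MRBA k R Ω lam P :=
  RingQuot.mkAlgHom k (MRBRel k R Ω lam P)

noncomputable def MRBA.gR (r : R) : MRBA k R Ω lam P :=
  MRBA.mk k R Ω lam P (FreeAlgebra.ι k (.inl r))

noncomputable def MRBA.gO (ω : Ω) : MRBA k R Ω lam P :=
  MRBA.mk k R Ω lam P (FreeAlgebra.ι k (.inr ω))

variable {k R Ω lam P}

theorem MRBA.gR_add (x y : R) :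
    MRBA.gR k R Ω lam P (x + y) = MRBA.gR k R Ω lam P x + MRBA.gR k R Ω lam P y := by
  unfold MRBA.gR MRBA.mk
  rw [RingQuot.mkAlgHom_rel k (MRBRel.add x y), map_add]

theorem MRBA.gR_mul (x y : R) :
    MRBA.gR k R Ω lam P (x * y) = MRBA.gR k R Ω lam P x * MRBA.gR k R Ω lam P y := by
  unfold MRBA.gR MRBA.mk
  rw [RingQuot.mkAlgHom_rel k (MRBRel.mul x y), map_mul]

theorem MRBA.gR_one : MRBA.gR k R Ω lam P 1 = 1 := by
  unfold MRBA.gR MRBA.mk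
  rw [RingQuot.mkAlgHom_rel k MRBRel.one, map_one]

theorem MRBA.gR_smul (c : k) (x : R) :
    MRBA.gR k R Ω lam P (c • x) = c • MRBA.gR k R Ω lam P x := by
  unfold MRBA.gR MRBA.mk
  rw [RingQuot.mkAlgHom_rel k (MRBRel.smul c x), map_smul]

theorem MRBA.rb_rel (α β : Ω) (x : R) :
    MRBA.gR k R Ω lam P (P α x) * MRBA.gO k R Ω lam P β =
      MRBA.gO k R Ω lam P α * MRBA.gR k R Ω lam P x * MRBA.gO k R Ω lam P β
        + MRBA.gO k R Ω lam P β * MRBA.gR k R Ω lam P (P α x)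
        + lam β • (MRBA.gO k R Ω lam P α * MRBA.gR k R Ω lam P x)
        + lam α • (MRBA.gO k R Ω lam P β * MRBA.gR k R Ω lam P x) := by
  unfold MRBA.gR MRBA.gO MRBA.mk
  rw [← map_mul, RingQuot.mkAlgHom_rel k (MRBRel.rb α β x)]
  simp [map_add, map_mul, map_smul]

variable (k R Ω lam P)

/-- `R` maps into the enveloping algebra as a ring homomorphism. -/
noncomputable def MRBA.ofR : R →+* MRBA k R Ω lam P :=
  RingHom.mk' { toFun := MRBA.gR k R Ω lam P,
                map_one' := MRBA.gR_one,
                map_mul' := MRBA.gR_mul } MRBA.gR_add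

noncomputable instance MRBA.moduleR : Module R (MRBA k R Ω lam P) :=
  Module.compHom _ (MRBA.ofR k R Ω lam P)

variable {k R Ω lam P}

theorem MRBA.smul_def (r : R) (a : MRBA k R Ω lam P) :
    r • a = MRBA.gR k R Ω lam P r * a := rfl

noncomputable instance MRBA.towerR : IsScalarTower k R (MRBA k R Ω lam P) := by
  constructor
  intro c r a
  rw [MRBA.smul_def, MRBA.smul_def, MRBA.gR_smul, smul_mul_assoc]

/-- The action of the enveloping algebra on a multiple Rota-Baxter module. -/
noncomputable def MRBModule.rho (N : MRBModule k R Ω lam P) :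
    MRBA k R Ω lam P →ₐ[k] Module.End k N.carrier :=
  RingQuot.liftAlgHom k
    ⟨FreeAlgebra.lift k (fun s => match s with
      | .inl x =>
        { toFun := fun n => x • n
          map_add' := fun a b => smul_add x a b
          map_smul' := fun c n => smul_comm x c n }
      | .inr ω => N.op ω),
     by
      intro a b h
      induction h with
      | add x y =>
        simp only [map_add, FreeAlgebra.lift_ι_apply]
        ext n
        exact add_smul x y n
      | mul x y =>
        simp only [map_mul, FreeAlgebra.lift_ι_apply]
        ext n
        exact mul_smul x y n
      | one =>
        simp only [map_one, FreeAlgebra.lift_ι_apply]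
        ext n
        exact one_smul R n
      | smul c x =>
        simp only [map_smul, FreeAlgebra.lift_ι_apply]
        ext n
        exact smul_assoc c x n
      | rb α β x =>
        simp only [map_add, map_mul, map_smul, FreeAlgebra.lift_ι_apply]
        ext n
        simpa using N.rb α β x n⟩

theorem MRBModule.rho_gR (N : MRBModule k R Ω lam P) (r : R) (n : N.carrier) :
    N.rho (MRBA.gR k R Ω lam P r) n = r • n := by
  rw [MRBModule.rho, MRBA.gR, MRBA.mk, RingQuot.liftAlgHom_mkAlgHom_apply,
    FreeAlgebra.lift_ι_apply]
  rfl

theorem MRBModule.rho_gO (N : MRBModule k R Ω lam P) (ω : Ω) (n : N.carrier) :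
    N.rho (MRBA.gO k R Ω lam P ω) n = N.op ω n := by
  rw [MRBModule.rho, MRBA.gO, MRBA.mk, RingQuot.liftAlgHom_mkAlgHom_apply,
    FreeAlgebra.lift_ι_apply]

end Aux

section Free

variable (k R Ω : Type u) [CommRing k] [Ring R] [Algebra k R]
  (lam : Ω → k) (P : Ω → R →ₗ[k] R) (X : Type u)

/-- The free multiple Rota-Baxter module on `X`. -/
noncomputable abbrev MRBFree : MRBModule k R Ω lam P where
  carrier := X →₀ MRBA k R Ω lam P
  op ω := Finsupp.mapRange.linearMap (LinearMap.mulLeft k (MRBA.gO k R Ω lam P ω))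
  rb := by
    intro α β x f
    ext i
    simp only [Finsupp.smul_apply, Finsupp.add_apply, Finsupp.mapRange.linearMap_apply,
      Finsupp.mapRange_apply, LinearMap.mulLeft_apply, MRBA.smul_def]
    have h := congrArg (· * f i) (MRBA.rb_rel (lam := lam) (P := P) α β x)
    simpa [add_mul, smul_mul_assoc, mul_assoc] using h

variable {k R Ω lam P X}

theorem MRBFree.op_single (ω : Ω) (x : X) (a : MRBA k R Ω lam P) :
    (MRBFree k R Ω lam P X).op ω (Finsupp.single x a)
      = Finsupp.single x (MRBA.gO k R Ω lam P ω * a) := by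
  show Finsupp.mapRange.linearMap (LinearMap.mulLeft k (MRBA.gO k R Ω lam P ω))
      (Finsupp.single x a) = _
  simp [Finsupp.mapRange_single]

theorem MRBFree.smul_single (r : R) (x : X) (a : MRBA k R Ω lam P) :
    (r • Finsupp.single x a : X →₀ MRBA k R Ω lam P)
      = Finsupp.single x (MRBA.gR k R Ω lam P r * a) := by
  rw [Finsupp.smul_single, MRBA.smul_def]

theorem MRBFree.ksmul_single (c : k) (x : X) (a : MRBA k R Ω lam P) :
    (c • Finsupp.single x a : X →₀ MRBA k R Ω lam P)
      = Finsupp.single x (c • a) := by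
  rw [Finsupp.smul_single]

end Free

/-- Every left `(R, P_Ω)`-module is isomorphic to a quotient of a free
left `(R, P_Ω)`-module: there exist a set `X`, a free left `(R, P_Ω)`-module `F` on `X`
(with structure map `j : X → F` satisfying the universal property), and a surjective left
`(R, P_Ω)`-module homomorphism `F → M`. -/
theorem multiple_rota_baxter_module_is_quotient_of_free
    (k R Ω : Type u) [CommRing k] [Ring R] [Algebra k R] [Nonempty Ω]
    (lam : Ω → k)
    (P : Ω → R →ₗ[k] R)
    (hP : ∀ (α β : Ω) (r₁ r₂ : R),
      P α r₁ * P β r₂ =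
        P α (r₁ * P β r₂) + P β (P α r₁ * r₂)
          + lam β • P α (r₁ * r₂) + lam α • P β (r₁ * r₂))
    (M : MRBModule k R Ω lam P) :
    ∃ (X : Type u) (F : MRBModule k R Ω lam P) (j : X → F.carrier),
      (∀ (N : MRBModule k R Ω lam P) (φ : X → N.carrier),
        ∃! φt : F.carrier →ₗ[R] N.carrier,
          (∀ (ω : Ω) (u : F.carrier), φt (F.op ω u) = N.op ω (φt u)) ∧
          ∀ x : X, φt (j x) = φ x) ∧
      ∃ π : F.carrier →ₗ[R] M.carrier,
        (∀ (ω : Ω) (u : F.carrier), π (F.op ω u) = M.op ω (π u)) ∧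
        Function.Surjective π := by
  classical
  set A := MRBA k R Ω lam P with hA
  set F : MRBModule k R Ω lam P := MRBFree k R Ω lam P M.carrier with hF
  have hcar : F.carrier = (M.carrier →₀ A) := rfl
  have huniv : ∀ (N : MRBModule k R Ω lam P) (φ : M.carrier → N.carrier),
      ∃! φt : F.carrier →ₗ[R] N.carrier,
        (∀ (ω : Ω) (u : F.carrier), φt (F.op ω u) = N.op ω (φt u)) ∧
        ∀ x : M.carrier, φt (Finsupp.single x 1) = φ x := by
    intro N φ
    -- the lift as a k-linear map
    let ℓ : M.carrier → (A →ₗ[k] N.carrier) := fun x =>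
      { toFun := fun a => N.rho a (φ x)
        map_add' := by intro a b; simp
        map_smul' := by intro c a; simp }
    let φt0 : (M.carrier →₀ A) →ₗ[k] N.carrier := Finsupp.lsum k ℓ
    have hsingle : ∀ (x : M.carrier) (a : A),
        φt0 (Finsupp.single x a) = N.rho a (φ x) := by
      intro x a; simp [φt0, ℓ]
    have hsmul : ∀ (r : R) (u : M.carrier →₀ A), φt0 (r • u) = r • φt0 u := by
      intro r u
      induction u using Finsupp.induction_linear with
      | zero => simp
      | add f g hf hg => rw [smul_add, map_add, hf, hg, map_add, smul_add]
      | single x a =>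
        rw [MRBFree.smul_single, hsingle, hsingle, map_mul, Module.End.mul_apply,
          MRBModule.rho_gR]
    let φt : F.carrier →ₗ[R] N.carrier :=
      { toFun := φt0
        map_add' := φt0.map_add
        map_smul' := hsmul }
    have hφt_single : ∀ (x : M.carrier) (a : A),
        φt (Finsupp.single x a) = N.rho a (φ x) := hsingle
    have hop : ∀ (ω : Ω) (u : F.carrier), φt (F.op ω u) = N.op ω (φt u) := by
      intro ω u
      induction u using Finsupp.induction_linear with
      | zero => simp [φt]
      | add f g hf hg =>
        rw [map_add, map_add, hf, hg, map_add, map_add]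
      | single x a =>
        rw [show F.op ω (Finsupp.single x a)
            = Finsupp.single x (MRBA.gO k R Ω lam P ω * a) from MRBFree.op_single ω x a,
          hφt_single, hφt_single, map_mul, Module.End.mul_apply, MRBModule.rho_gO]
    have hj : ∀ x : M.carrier, φt (Finsupp.single x 1) = φ x := by
      intro x; rw [hφt_single, map_one, Module.End.one_apply]
    refine ⟨φt, ⟨hop, hj⟩, ?_⟩
    -- uniqueness
    rintro ψ ⟨hψop, hψj⟩
    have key : ∀ (a : A) (x : M.carrier) (b : A),
        ψ (Finsupp.single x (a * b)) = N.rho a (ψ (Finsupp.single x b)) := by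
      intro a
      obtain ⟨p, rfl⟩ := RingQuot.mkAlgHom_surjective k (MRBRel k R Ω lam P) a
      induction p using FreeAlgebra.induction with
      | grade0 c =>
        intro x b
        rw [AlgHom.commutes]
        rw [show (algebraMap k A c) * b = c • b by rw [Algebra.smul_def]]
        rw [← MRBFree.ksmul_single (lam := lam) (P := P) c x b]
        rw [LinearMap.map_smul_of_tower, AlgHom.commutes, Module.algebraMap_end_apply]
      | grade1 s =>
        rcases s with r | ω
        · intro x b
          have : (RingQuot.mkAlgHom k (MRBRel k R Ω lam P)) (FreeAlgebra.ι k (Sum.inl r))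
              = MRBA.gR k R Ω lam P r := rfl
          rw [this, ← MRBFree.smul_single (lam := lam) (P := P) r x b, map_smul,
            ← MRBModule.rho_gR N r]
        · intro x b
          have : (RingQuot.mkAlgHom k (MRBRel k R Ω lam P)) (FreeAlgebra.ι k (Sum.inr ω))
              = MRBA.gO k R Ω lam P ω := rfl
          rw [this, ← MRBFree.op_single (lam := lam) (P := P) ω x b, hψop,
            ← MRBModule.rho_gO N ω]
      | mul p q hp hq =>
        intro x b
        rw [map_mul, mul_assoc, hp, hq, map_mul, Module.End.mul_apply]
      | add p q hp hq =>
        intro x b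
        rw [map_add, add_mul, Finsupp.single_add, map_add, hp, hq, map_add,
          LinearMap.add_apply]
    refine LinearMap.ext ?_
    intro u
    induction u using Finsupp.induction_linear with
    | zero => simp
    | add f g hf hg => rw [map_add, map_add, hf, hg]
    | single x a =>
      rw [show (a : A) = a * 1 by rw [mul_one]] 
      rw [key, hψj, hφt_single x (a * 1), mul_one]
  obtain ⟨π, ⟨hπop, hπj⟩, -⟩ := huniv M id
  exact ⟨M.carrier, F, fun x => Finsupp.single x 1, huniv, π, hπop,
    fun m => ⟨Finsupp.single m 1, hπj m⟩⟩
end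

section
/- Let X be a set, let F̃(X) be the free left R-module on X realized as finitely supported functions from X to R, equipped with the operators 𝔭̃_ω(Σ r_x x) = Σ P_ω(r_x) x, and let j_X : X → F̃(X) send x to the basis element 1_R·x. Then (F̃(X),𝔭̃_Ω) is the restricted free left (R,P_Ω)-module on X: for every left (R,P_Ω)-module (M,𝔪_Ω) and every set map φ : X → M whose image is contained in MC(M), there exists a unique left (R,P_Ω)-module homomorphism φ̄ : F̃(X) → M with φ̄ ∘ j_X = φ. -/
/-!
An `R`-linear map out of `X →₀ R` is determined by the images of the `single x 1`, so the
extension must be `linearCombination R φ`. It commutes with the operators because both sides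
are additive in `u` and, on `single x r`, module-constancy of `φ x` turns
`𝔪_ω (r • φ x)` into `P_ω r • φ x`.
-/

open Finsupp

theorem Finsupp.apply_single_eq_single_of_forall_apply {X R S : Type*} [Zero R] [Zero S]
    {T : (X →₀ R) → (X →₀ S)} {g : R → S} (hg : g 0 = 0) (hT : ∀ u x, T u x = g (u x))
    (x : X) (r : R) : T (single x r) = single x (g r) := by
  ext y
  rw [hT]
  by_cases h : x = y
  · simp [h]
  · simp [h, hg]

section LinearCombination

variable {X R M : Type*} [Ring R] [AddCommGroup M] [Module R M]

theorem Finsupp.linearCombination_map_eq_of_map_single {φ : X → M}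
    {T : (X →₀ R) →+ (X →₀ R)} {m : M →+ M} {Q : R → R}
    (hT : ∀ x r, T (single x r) = single x (Q r)) (hm : ∀ x r, m (r • φ x) = Q r • φ x)
    (u : X →₀ R) : linearCombination R φ (T u) = m (linearCombination R φ u) := by
  induction u using Finsupp.induction_linear with
  | zero => simp
  | add u v hu hv => simp only [map_add, hu, hv]
  | single x r => simp [hT, hm]

theorem Finsupp.eq_linearCombination_of_apply_single_one {φ : X → M}
    {ψ : (X →₀ R) →ₗ[R] M} (h : ∀ x, ψ (single x 1) = φ x) : ψ = linearCombination R φ :=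
  lhom_ext' fun x => LinearMap.ext_ring (by simp [h])

end LinearCombination

theorem restricted_free_multiple_rota_baxter_module_general
    (k : Type*) [CommRing k]
    (R : Type*) [Ring R] [Algebra k R]
    (Ω : Type*)
    (P : Ω → R →ₗ[k] R)
    (X : Type*)
    (pt : Ω → (X →₀ R) →ₗ[k] (X →₀ R))
    (hpt : ∀ (ω : Ω) (u : X →₀ R) (x : X), pt ω u x = P ω (u x))
    (M : Type*) [AddCommGroup M] [Module k M] [Module R M]
    (mOp : Ω → M →ₗ[k] M)
    (φ : X → M)
    (hφ : ∀ (x : X) (r : R) (ω : Ω), mOp ω (r • φ x) = P ω r • φ x) :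
    ∃! φbar : (X →₀ R) →ₗ[R] M,
      (∀ (ω : Ω) (u : X →₀ R), φbar (pt ω u) = mOp ω (φbar u)) ∧
      ∀ x : X, φbar (Finsupp.single x 1) = φ x := by
  refine ⟨linearCombination R φ, ⟨fun ω u => ?_, fun x => by simp⟩,
    fun ψ ⟨_, hψ⟩ => eq_linearCombination_of_apply_single_one hψ⟩
  have hpt_single : ∀ x r, pt ω (single x r) = single x (P ω r) :=
    apply_single_eq_single_of_forall_apply (map_zero (P ω)) (hpt ω)
  exact linearCombination_map_eq_of_map_single (T := (pt ω).toAddMonoidHom)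
    (m := (mOp ω).toAddMonoidHom) hpt_single (fun x r => hφ x r ω) u

/-- The free left `R`-module `F̃(X) = X →₀ R` with the operators
`𝔭̃_ω (Σ r_x x) = Σ P_ω(r_x) x` and `j_X : x ↦ 1_R · x` is the restricted free left
`(R, P_Ω)`-module on `X`: every set map `φ : X → M` into a left `(R, P_Ω)`-module whose
image consists of module constants extends uniquely to a left `(R, P_Ω)`-module
homomorphism `F̃(X) → M`. -/
theorem restricted_free_multiple_rota_baxter_module
    (k : Type*) [CommRing k]
    (R : Type*) [Ring R] [Algebra k R]
    (Ω : Type*) [Nonempty Ω]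
    (lam : Ω → k)
    (P : Ω → R →ₗ[k] R)
    (hP : ∀ (α β : Ω) (r₁ r₂ : R),
      P α r₁ * P β r₂ =
        P α (r₁ * P β r₂) + P β (P α r₁ * r₂)
          + lam β • P α (r₁ * r₂) + lam α • P β (r₁ * r₂))
    (X : Type*)
    (pt : Ω → (X →₀ R) →ₗ[k] (X →₀ R))
    (hpt : ∀ (ω : Ω) (u : X →₀ R) (x : X), pt ω u x = P ω (u x))
    (M : Type*) [AddCommGroup M] [Module k M] [Module R M] [IsScalarTower k R M]
    (mOp : Ω → M →ₗ[k] M)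
    (hM : ∀ (α β : Ω) (x : R) (m : M),
      P α x • mOp β m =
        mOp α (x • mOp β m) + mOp β (P α x • m)
          + lam β • mOp α (x • m) + lam α • mOp β (x • m))
    (φ : X → M)
    (hφ : ∀ (x : X) (r : R) (ω : Ω), mOp ω (r • φ x) = P ω r • φ x) :
    ∃! φbar : (X →₀ R) →ₗ[R] M,
      (∀ (ω : Ω) (u : X →₀ R), φbar (pt ω u) = mOp ω (φbar u)) ∧
      ∀ x : X, φbar (Finsupp.single x 1) = φ x :=
  restricted_free_multiple_rota_baxter_module_general k R Ω P X pt hpt M mOp φ hφ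
end

section
/- Regard R as a left (R,P_Ω)-module over itself via left multiplication, with operators P_Ω. Then (R,P_Ω) is the restricted free left (R,P_Ω)-module on a singleton set: for every left (R,P_Ω)-module (M,𝔪_Ω) and every element m ∈ MC(M), there exists a unique left (R,P_Ω)-module homomorphism f : R → M with f(1_R) = m. -/
theorem self_is_restricted_free_multiple_rota_baxter_module_on_singleton_general
    (k : Type*) [CommRing k]
    (R : Type*) [Ring R] [Algebra k R]
    (Ω : Type*)
    (P : Ω → R →ₗ[k] R)
    (M : Type*) [AddCommGroup M] [Module k M] [Module R M]
    (mOp : Ω → M →ₗ[k] M)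
    (m : M)
    (hm : ∀ (r : R) (ω : Ω), mOp ω (r • m) = P ω r • m) :
    ∃! f : R →ₗ[R] M,
      (∀ (ω : Ω) (r : R), f (P ω r) = mOp ω (f r)) ∧ f 1 = m := by
  refine ⟨LinearMap.toSpanSingleton R M m, ⟨fun ω r => (hm r ω).symm, one_smul R m⟩, ?_⟩
  rintro g ⟨-, hg_one⟩
  exact LinearMap.ext_ring (hg_one.trans (one_smul R m).symm)

/-- `(R, P_Ω)`, regarded as a left module over itself via left
multiplication with operators `P_Ω`, is the restricted free left `(R, P_Ω)`-module on a
singleton: for every left `(R, P_Ω)`-module `(M, 𝔪_Ω)` and every module constant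
`m ∈ MC(M)` there is a unique left `(R, P_Ω)`-module homomorphism `f : R → M` with
`f 1 = m`. -/
theorem self_is_restricted_free_multiple_rota_baxter_module_on_singleton
    (k : Type*) [CommRing k]
    (R : Type*) [Ring R] [Algebra k R]
    (Ω : Type*) [Nonempty Ω]
    (lam : Ω → k)
    (P : Ω → R →ₗ[k] R)
    (hP : ∀ (α β : Ω) (r₁ r₂ : R),
      P α r₁ * P β r₂ =
        P α (r₁ * P β r₂) + P β (P α r₁ * r₂)
          + lam β • P α (r₁ * r₂) + lam α • P β (r₁ * r₂))
    (M : Type*) [AddCommGroup M] [Module k M] [Module R M] [IsScalarTower k R M]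
    (mOp : Ω → M →ₗ[k] M)
    (hM : ∀ (α β : Ω) (x : R) (m : M),
      P α x • mOp β m =
        mOp α (x • mOp β m) + mOp β (P α x • m)
          + lam β • mOp α (x • m) + lam α • mOp β (x • m))
    (m : M)
    (hm : ∀ (r : R) (ω : Ω), mOp ω (r • m) = P ω r • m) :
    ∃! f : R →ₗ[R] M,
      (∀ (ω : Ω) (r : R), f (P ω r) = mOp ω (f r)) ∧ f 1 = m :=
  self_is_restricted_free_multiple_rota_baxter_module_on_singleton_general k R Ω P M mOp m hm
end

section
/- Let (R,P_Ω) and (R'',P''_Ω) be multiple Rota-Baxter algebras of pair weight (λ_Ω,λ_Ω). Let (M,𝔪^R_Ω) be a right (R,P_Ω)-module and (N,𝔫^{R''}_Ω,𝔫^R_Ω) an (R'',P''_Ω)-(R,P_Ω)-bimodule. Then Hom_{(R,P_Ω)}(M,N) is a left (R'',P''_Ω)-module, where the R''-action is (r''φ)(m) := r''·φ(m) and the operators are 𝔮_ω(φ) := 𝔫^{R''}_ω ∘ φ. In particular: (i) for every right (R,P_Ω)-module homomorphism φ : M → N and every r'' ∈ R'', ω ∈ Ω, the maps r''φ and 𝔮_ω(φ)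 are again right (R,P_Ω)-module homomorphisms; and (ii) P''_α(r'')·𝔮_β(φ) = 𝔮_α(r''·𝔮_β(φ)) + 𝔮_β(P''_α(r'')·φ) + λ_β·𝔮_α(r''·φ) + λ_α·𝔮_β(r''·φ) for all r'' ∈ R'', α,β ∈ Ω. -/
open MulOpposite

section Intertwining

variable {k A S ι M N : Type*} [CommRing k] [Ring A] [Ring S]
  [AddCommGroup M] [Module k M] [Module A M]
  [AddCommGroup N] [Module k N] [Module A N] [Module S N] [SMulCommClass A S N]
  (mOp : ι → M →ₗ[k] M) (nOp : ι → N →ₗ[k] N)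

def intertwiningSubmodule (hS : ∀ ω (s : S) n, nOp ω (s • n) = s • nOp ω n) :
    Submodule S (M →ₗ[A] N) where
  carrier := {φ | ∀ ω m, φ (mOp ω m) = nOp ω (φ m)}
  add_mem' {φ ψ} hφ hψ ω m := by
    simp only [LinearMap.add_apply, hφ ω m, hψ ω m, map_add]
  zero_mem' ω m := by simp
  smul_mem' s φ hφ ω m := by
    simp only [LinearMap.smul_apply, hφ ω m, hS]

theorem coe_intertwiningSubmodule (hS : ∀ ω (s : S) n, nOp ω (s • n) = s • nOp ω n) :
    (intertwiningSubmodule (A := A) mOp nOp hS : Set (M →ₗ[A] N)) =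
      {φ | ∀ ω m, φ (mOp ω m) = nOp ω (φ m)} :=
  rfl

end Intertwining

theorem LinearMap.comp_intertwining {k A ι M N : Type*} [CommRing k] [Ring A]
    [AddCommGroup M] [Module k M] [Module A M] [AddCommGroup N] [Module k N] [Module A N]
    {mOp : ι → M →ₗ[k] M} {nOp : ι → N →ₗ[k] N} {φ : M →ₗ[A] N} (f : N →ₗ[A] N)
    (hf : ∀ ω n, nOp ω (f n) = f (nOp ω n)) (hφ : ∀ ω m, φ (mOp ω m) = nOp ω (φ m))
    (ω : ι) (m : M) : (f ∘ₗ φ) (mOp ω m) = nOp ω ((f ∘ₗ φ) m) := by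
  simp only [LinearMap.comp_apply, hφ, hf]

def LinearMap.ofCommuteSMul {k A N : Type*} [CommRing k] [Ring A] [AddCommGroup N]
    [Module k N] [Module A N] (f : N →ₗ[k] N) (hf : ∀ (a : A) n, f (a • n) = a • f n) :
    N →ₗ[A] N where
  toFun := f
  map_add' := f.map_add
  map_smul' := hf

theorem hom_into_bimodule_is_left_multiple_rota_baxter_module_general
    (k : Type*) [CommRing k]
    (R : Type*) [Ring R]
    (R'' : Type*) [Ring R''] [Algebra k R'']
    (Ω : Type*)
    (lam : Ω → k)
    (P'' : Ω → R'' →ₗ[k] R'')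
    -- `M` is a right `(R, P_Ω)`-module
    (M : Type*) [AddCommGroup M] [Module k M] [Module Rᵐᵒᵖ M]
    (mOp : Ω → M →ₗ[k] M)
    -- `N` is an `(R'', P''_Ω)`-`(R, P_Ω)`-bimodule
    (N : Type*) [AddCommGroup N] [Module k N] [Module R'' N] [Module Rᵐᵒᵖ N]
    [SMulCommClass Rᵐᵒᵖ R'' N]
    (nOp'' : Ω → N →ₗ[k] N) (nOp : Ω → N →ₗ[k] N)
    (hN'' : ∀ (α β : Ω) (x : R'') (n : N),
      P'' α x • nOp'' β n =
        nOp'' α (x • nOp'' β n) + nOp'' β (P'' α x • n)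
          + lam β • nOp'' α (x • n) + lam α • nOp'' β (x • n))
    (hcomp₁ : ∀ (ω : Ω) (r'' : R'') (n : N), nOp ω (r'' • n) = r'' • nOp ω n)
    (hcomp₂ : ∀ (ω : Ω) (r : R) (n : N), nOp'' ω (op r • n) = op r • nOp'' ω n)
    (hcomp₃ : ∀ (ω τ : Ω) (n : N), nOp τ (nOp'' ω n) = nOp'' ω (nOp τ n)) :
    -- the homomorphisms form an `R''`-submodule of `Hom_R(M, N)`
    (∃ S : Submodule R'' (M →ₗ[Rᵐᵒᵖ] N),
      (S : Set (M →ₗ[Rᵐᵒᵖ] N)) =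
        {φ : M →ₗ[Rᵐᵒᵖ] N | ∀ (ω : Ω) (m : M), φ (mOp ω m) = nOp ω (φ m)}) ∧
    ∀ φ : M →ₗ[Rᵐᵒᵖ] N, (∀ (ω : Ω) (m : M), φ (mOp ω m) = nOp ω (φ m)) →
      -- (i) `r''·φ` is again a right `(R, P_Ω)`-module homomorphism
      (∀ (r'' : R'') (ω : Ω) (m : M),
        (r'' • φ) (mOp ω m) = nOp ω ((r'' • φ) m)) ∧
      -- (i) `𝔮_ω(φ) = 𝔫''_ω ∘ φ` is again a right `(R, P_Ω)`-module homomorphism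
      (∀ ω : Ω, ∃ ψ : M →ₗ[Rᵐᵒᵖ] N,
        (∀ m : M, ψ m = nOp'' ω (φ m)) ∧
        ∀ (τ : Ω) (m : M), ψ (mOp τ m) = nOp τ (ψ m)) ∧
      -- (ii) the multiple Rota-Baxter module identity for `𝔮_Ω`
      (∀ (r'' : R'') (α β : Ω) (m : M),
        P'' α r'' • nOp'' β (φ m) =
          nOp'' α (r'' • nOp'' β (φ m)) + nOp'' β (P'' α r'' • φ m)
            + lam β • nOp'' α (r'' • φ m) + lam α • nOp'' β (r'' • φ m)) := by
  let Hom := intertwiningSubmodule (A := Rᵐᵒᵖ) mOp nOp hcomp₁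
  refine ⟨⟨Hom, coe_intertwiningSubmodule mOp nOp hcomp₁⟩, fun φ hφ => ⟨?_, ?_, ?_⟩⟩
  · exact fun r'' => Hom.smul_mem r'' (show φ ∈ Hom from hφ)
  · intro ω
    let q := LinearMap.ofCommuteSMul (nOp'' ω) fun (r : Rᵐᵒᵖ) n => hcomp₂ ω r.unop n
    exact ⟨q ∘ₗ φ, fun m => rfl, LinearMap.comp_intertwining q (fun τ n => hcomp₃ ω τ n) hφ⟩
  · exact fun r'' α β m => hN'' α β r'' (φ m)

open MulOpposite in
/-- If `(M, 𝔪_Ω)` is a right `(R, P_Ω)`-module and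
`(N, 𝔫''_Ω, 𝔫_Ω)` is an `(R'', P''_Ω)`-`(R, P_Ω)`-bimodule, then the set of right
`(R, P_Ω)`-module homomorphisms `Hom_{(R,P_Ω)}(M, N)` is a left `(R'', P''_Ω)`-module
with action `(r''·φ)(m) := r''·φ(m)` and operators `𝔮_ω(φ) := 𝔫''_ω ∘ φ`; in
particular `r''·φ` and `𝔮_ω(φ)` are again right `(R, P_Ω)`-module homomorphisms, and
the multiple Rota-Baxter module identity holds for the `𝔮_ω`. -/
theorem hom_into_bimodule_is_left_multiple_rota_baxter_module
    (k : Type*) [CommRing k]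
    (R : Type*) [Ring R] [Algebra k R]
    (R'' : Type*) [Ring R''] [Algebra k R'']
    (Ω : Type*) [Nonempty Ω]
    (lam : Ω → k)
    (P : Ω → R →ₗ[k] R)
    (hP : ∀ (α β : Ω) (r₁ r₂ : R),
      P α r₁ * P β r₂ =
        P α (r₁ * P β r₂) + P β (P α r₁ * r₂)
          + lam β • P α (r₁ * r₂) + lam α • P β (r₁ * r₂))
    (P'' : Ω → R'' →ₗ[k] R'')
    (hP'' : ∀ (α β : Ω) (r₁ r₂ : R''),
      P'' α r₁ * P'' β r₂ =
        P'' α (r₁ * P'' β r₂) + P'' β (P'' α r₁ * r₂)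
          + lam β • P'' α (r₁ * r₂) + lam α • P'' β (r₁ * r₂))
    -- `M` is a right `(R, P_Ω)`-module
    (M : Type*) [AddCommGroup M] [Module k M] [Module Rᵐᵒᵖ M]
    [IsScalarTower k Rᵐᵒᵖ M]
    (mOp : Ω → M →ₗ[k] M)
    (hM : ∀ (α β : Ω) (x : R) (m : M),
      mOp β (op (P α x) • m) =
        mOp β (op x • mOp α m) + op (P α x) • mOp β m
          + lam β • (op x • mOp α m) + lam α • (op x • mOp β m))
    -- `N` is an `(R'', P''_Ω)`-`(R, P_Ω)`-bimodule
    (N : Type*) [AddCommGroup N] [Module k N] [Module R'' N] [Module Rᵐᵒᵖ N]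
    [IsScalarTower k R'' N] [IsScalarTower k Rᵐᵒᵖ N]
    [SMulCommClass R'' Rᵐᵒᵖ N] [SMulCommClass Rᵐᵒᵖ R'' N]
    (nOp'' : Ω → N →ₗ[k] N) (nOp : Ω → N →ₗ[k] N)
    (hN'' : ∀ (α β : Ω) (x : R'') (n : N),
      P'' α x • nOp'' β n =
        nOp'' α (x • nOp'' β n) + nOp'' β (P'' α x • n)
          + lam β • nOp'' α (x • n) + lam α • nOp'' β (x • n))
    (hN : ∀ (α β : Ω) (x : R) (n : N),
      nOp β (op (P α x) • n) =
        nOp β (op x • nOp α n) + op (P α x) • nOp β n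
          + lam β • (op x • nOp α n) + lam α • (op x • nOp β n))
    (hcomp₁ : ∀ (ω : Ω) (r'' : R'') (n : N), nOp ω (r'' • n) = r'' • nOp ω n)
    (hcomp₂ : ∀ (ω : Ω) (r : R) (n : N), nOp'' ω (op r • n) = op r • nOp'' ω n)
    (hcomp₃ : ∀ (ω τ : Ω) (n : N), nOp τ (nOp'' ω n) = nOp'' ω (nOp τ n)) :
    -- the homomorphisms form an `R''`-submodule of `Hom_R(M, N)`
    (∃ S : Submodule R'' (M →ₗ[Rᵐᵒᵖ] N),
      (S : Set (M →ₗ[Rᵐᵒᵖ] N)) =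
        {φ : M →ₗ[Rᵐᵒᵖ] N | ∀ (ω : Ω) (m : M), φ (mOp ω m) = nOp ω (φ m)}) ∧
    ∀ φ : M →ₗ[Rᵐᵒᵖ] N, (∀ (ω : Ω) (m : M), φ (mOp ω m) = nOp ω (φ m)) →
      -- (i) `r''·φ` is again a right `(R, P_Ω)`-module homomorphism
      (∀ (r'' : R'') (ω : Ω) (m : M),
        (r'' • φ) (mOp ω m) = nOp ω ((r'' • φ) m)) ∧
      -- (i) `𝔮_ω(φ) = 𝔫''_ω ∘ φ` is again a right `(R, P_Ω)`-module homomorphism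
      (∀ ω : Ω, ∃ ψ : M →ₗ[Rᵐᵒᵖ] N,
        (∀ m : M, ψ m = nOp'' ω (φ m)) ∧
        ∀ (τ : Ω) (m : M), ψ (mOp τ m) = nOp τ (ψ m)) ∧
      -- (ii) the multiple Rota-Baxter module identity for `𝔮_Ω`
      (∀ (r'' : R'') (α β : Ω) (m : M),
        P'' α r'' • nOp'' β (φ m) =
          nOp'' α (r'' • nOp'' β (φ m)) + nOp'' β (P'' α r'' • φ m)
            + lam β • nOp'' α (r'' • φ m) + lam α • nOp'' β (r'' • φ m)) :=
  hom_into_bimodule_is_left_multiple_rota_baxter_module_general k R R'' Ω lam P'' M mOp N nOp'' nOp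
    hN'' hcomp₁ hcomp₂ hcomp₃
end

section
/- Let (R,P_Ω) and (R',P'_Ω) be multiple Rota-Baxter algebras of pair weight (λ_Ω,λ_Ω). Let (M,𝔪^R_Ω,𝔪^{R'}_Ω) be an (R,P_Ω)-(R',P'_Ω)-bimodule and (N,𝔫^R_Ω) a left (R,P_Ω)-module. Then Hom_{(R,P_Ω)}(M,N) is a left (R',P'_Ω)-module, where the R'-action is (r'φ)(m) := φ(mr') and the operators are 𝔮_ω(φ)(m) := φ(𝔪^{R'}_ω(m)). In particular: (i) for every left (R,P_Ω)-module homomorphism φ : M → N and every r' ∈ R', ω ∈ Ω, the maps r'φ and 𝔮_ω(φ) are again left (R,P_Ω)-module homomorphisms; and (ii) P'_α(r')·𝔮_β(φ) = 𝔮_α(r'·𝔮_β(φ)) + 𝔮_β(P'_α(r')·φ) + λ_β·𝔮_α(r'·φ) + λ_α·𝔮_β(r'·φ) for all r' ∈ R', α,β ∈ Ω. -/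
section Intertwiners

variable {k R M N Ω : Type*} [CommSemiring k] [Semiring R]
  [AddCommGroup M] [Module k M] [Module R M] [AddCommGroup N] [Module k N] [Module R N]

-- `Hom_{(R,P_Ω)}(M, N)` when `f` and `g` are the operator families of `M` and `N`.
def intertwiners (f : Ω → M →ₗ[k] M) (g : Ω → N →ₗ[k] N) : AddSubgroup (M →ₗ[R] N) where
  carrier := {φ | ∀ ω m, φ (f ω m) = g ω (φ m)}
  add_mem' ha hb ω m := by simp [ha ω m, hb ω m]
  zero_mem' ω m := by simp
  neg_mem' ha ω m := by simp [ha ω m]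

theorem comp_mem_intertwiners {f : Ω → M →ₗ[k] M} {g : Ω → N →ₗ[k] N} {φ : M →ₗ[R] N}
    (hφ : φ ∈ intertwiners f g) {u : M →ₗ[R] M} (hu : ∀ ω m, u (f ω m) = f ω (u m)) :
    φ ∘ₗ u ∈ intertwiners f g := fun ω m => by
  simpa only [LinearMap.comp_apply, hu] using hφ ω (u m)

end Intertwiners

open MulOpposite in
theorem hom_from_bimodule_is_left_multiple_rota_baxter_module_general
    (k : Type*) [CommRing k]
    (R : Type*) [Ring R] [Algebra k R]
    (R' : Type*) [Ring R'] [Algebra k R']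
    (Ω : Type*)
    (lam : Ω → k)
    (P' : Ω → R' →ₗ[k] R')
    -- `M` is an `(R, P_Ω)`-`(R', P'_Ω)`-bimodule
    (M : Type*) [AddCommGroup M] [Module k M] [Module R M] [Module R'ᵐᵒᵖ M]
    [IsScalarTower k R M]
    [SMulCommClass R'ᵐᵒᵖ R M]
    (mR : Ω → M →ₗ[k] M) (mR' : Ω → M →ₗ[k] M)
    (hMr : ∀ (α β : Ω) (x : R') (m : M),
      mR' β (op (P' α x) • m) =
        mR' β (op x • mR' α m) + op (P' α x) • mR' β m
          + lam β • (op x • mR' α m) + lam α • (op x • mR' β m))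
    (hcomp₁ : ∀ (ω : Ω) (r : R) (m : M), mR' ω (r • m) = r • mR' ω m)
    (hcomp₂ : ∀ (ω : Ω) (r' : R') (m : M), mR ω (op r' • m) = op r' • mR ω m)
    (hcomp₃ : ∀ (ω τ : Ω) (m : M), mR' ω (mR τ m) = mR τ (mR' ω m))
    -- `N` is a left `(R, P_Ω)`-module
    (N : Type*) [AddCommGroup N] [Module k N] [Module R N] [IsScalarTower k R N]
    (nOp : Ω → N →ₗ[k] N) :
    -- the homomorphisms form an abelian subgroup of `Hom_R(M, N)`
    (∃ H : AddSubgroup (M →ₗ[R] N),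
      (H : Set (M →ₗ[R] N)) =
        {φ : M →ₗ[R] N | ∀ (ω : Ω) (m : M), φ (mR ω m) = nOp ω (φ m)}) ∧
    ∀ φ : M →ₗ[R] N, (∀ (ω : Ω) (m : M), φ (mR ω m) = nOp ω (φ m)) →
      -- (i) `r'·φ`, with `(r'·φ)(m) = φ(m·r')`, is again a left `(R, P_Ω)`-module hom
      (∀ r' : R', ∃ ψ : M →ₗ[R] N,
        (∀ m : M, ψ m = φ (op r' • m)) ∧
        ∀ (τ : Ω) (m : M), ψ (mR τ m) = nOp τ (ψ m)) ∧
      -- (i) `𝔮_ω(φ)`, with `𝔮_ω(φ)(m) = φ(𝔪^{R'}_ω(m))`, is again such a hom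
      (∀ ω : Ω, ∃ ψ : M →ₗ[R] N,
        (∀ m : M, ψ m = φ (mR' ω m)) ∧
        ∀ (τ : Ω) (m : M), ψ (mR τ m) = nOp τ (ψ m)) ∧
      -- (ii) the multiple Rota-Baxter module identity for `𝔮_Ω`, pointwise
      (∀ (r' : R') (α β : Ω) (m : M),
        φ (mR' β (op (P' α r') • m)) =
          φ (mR' β (op r' • mR' α m)) + φ (op (P' α r') • mR' β m)
            + lam β • φ (op r' • mR' α m) + lam α • φ (op r' • mR' β m)) := by
  refine ⟨⟨intertwiners mR nOp, rfl⟩, fun φ hφ => ⟨fun r' => ?_, fun ω => ?_, ?_⟩⟩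
  · exact ⟨φ ∘ₗ DistribSMul.toLinearMap R M (op r'), fun _ => rfl,
      comp_mem_intertwiners hφ fun τ m => (hcomp₂ τ r' m).symm⟩
  · exact ⟨φ ∘ₗ { mR' ω with map_smul' := hcomp₁ ω }, fun _ => rfl,
      comp_mem_intertwiners hφ (hcomp₃ ω)⟩
  · intro r' α β m
    simpa only [map_add, LinearMap.map_smul_of_tower] using congrArg φ (hMr α β r' m)

open MulOpposite in
/-- If `(M, 𝔪^R_Ω, 𝔪^{R'}_Ω)` is an `(R, P_Ω)`-`(R', P'_Ω)`-bimodule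
and `(N, 𝔫_Ω)` is a left `(R, P_Ω)`-module, then the set of left `(R, P_Ω)`-module
homomorphisms `Hom_{(R,P_Ω)}(M, N)` is a left `(R', P'_Ω)`-module with action
`(r'·φ)(m) := φ(m·r')` and operators `𝔮_ω(φ)(m) := φ(𝔪^{R'}_ω(m))`; in particular
`r'·φ` and `𝔮_ω(φ)` are again left `(R, P_Ω)`-module homomorphisms, and the multiple
Rota-Baxter module identity holds for the `𝔮_ω`. -/
theorem hom_from_bimodule_is_left_multiple_rota_baxter_module
    (k : Type*) [CommRing k]
    (R : Type*) [Ring R] [Algebra k R]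
    (R' : Type*) [Ring R'] [Algebra k R']
    (Ω : Type*) [Nonempty Ω]
    (lam : Ω → k)
    (P : Ω → R →ₗ[k] R)
    (hP : ∀ (α β : Ω) (r₁ r₂ : R),
      P α r₁ * P β r₂ =
        P α (r₁ * P β r₂) + P β (P α r₁ * r₂)
          + lam β • P α (r₁ * r₂) + lam α • P β (r₁ * r₂))
    (P' : Ω → R' →ₗ[k] R')
    (hP' : ∀ (α β : Ω) (r₁ r₂ : R'),
      P' α r₁ * P' β r₂ =
        P' α (r₁ * P' β r₂) + P' β (P' α r₁ * r₂)
          + lam β • P' α (r₁ * r₂) + lam α • P' β (r₁ * r₂))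
    -- `M` is an `(R, P_Ω)`-`(R', P'_Ω)`-bimodule
    (M : Type*) [AddCommGroup M] [Module k M] [Module R M] [Module R'ᵐᵒᵖ M]
    [IsScalarTower k R M] [IsScalarTower k R'ᵐᵒᵖ M]
    [SMulCommClass R R'ᵐᵒᵖ M] [SMulCommClass R'ᵐᵒᵖ R M]
    (mR : Ω → M →ₗ[k] M) (mR' : Ω → M →ₗ[k] M)
    (hMl : ∀ (α β : Ω) (x : R) (m : M),
      P α x • mR β m =
        mR α (x • mR β m) + mR β (P α x • m)
          + lam β • mR α (x • m) + lam α • mR β (x • m))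
    (hMr : ∀ (α β : Ω) (x : R') (m : M),
      mR' β (op (P' α x) • m) =
        mR' β (op x • mR' α m) + op (P' α x) • mR' β m
          + lam β • (op x • mR' α m) + lam α • (op x • mR' β m))
    (hcomp₁ : ∀ (ω : Ω) (r : R) (m : M), mR' ω (r • m) = r • mR' ω m)
    (hcomp₂ : ∀ (ω : Ω) (r' : R') (m : M), mR ω (op r' • m) = op r' • mR ω m)
    (hcomp₃ : ∀ (ω τ : Ω) (m : M), mR' ω (mR τ m) = mR τ (mR' ω m))
    -- `N` is a left `(R, P_Ω)`-module
    (N : Type*) [AddCommGroup N] [Module k N] [Module R N] [IsScalarTower k R N]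
    (nOp : Ω → N →ₗ[k] N)
    (hN : ∀ (α β : Ω) (x : R) (n : N),
      P α x • nOp β n =
        nOp α (x • nOp β n) + nOp β (P α x • n)
          + lam β • nOp α (x • n) + lam α • nOp β (x • n)) :
    -- the homomorphisms form an abelian subgroup of `Hom_R(M, N)`
    (∃ H : AddSubgroup (M →ₗ[R] N),
      (H : Set (M →ₗ[R] N)) =
        {φ : M →ₗ[R] N | ∀ (ω : Ω) (m : M), φ (mR ω m) = nOp ω (φ m)}) ∧
    ∀ φ : M →ₗ[R] N, (∀ (ω : Ω) (m : M), φ (mR ω m) = nOp ω (φ m)) →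
      -- (i) `r'·φ`, with `(r'·φ)(m) = φ(m·r')`, is again a left `(R, P_Ω)`-module hom
      (∀ r' : R', ∃ ψ : M →ₗ[R] N,
        (∀ m : M, ψ m = φ (op r' • m)) ∧
        ∀ (τ : Ω) (m : M), ψ (mR τ m) = nOp τ (ψ m)) ∧
      -- (i) `𝔮_ω(φ)`, with `𝔮_ω(φ)(m) = φ(𝔪^{R'}_ω(m))`, is again such a hom
      (∀ ω : Ω, ∃ ψ : M →ₗ[R] N,
        (∀ m : M, ψ m = φ (mR' ω m)) ∧
        ∀ (τ : Ω) (m : M), ψ (mR τ m) = nOp τ (ψ m)) ∧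
      -- (ii) the multiple Rota-Baxter module identity for `𝔮_Ω`, pointwise
      (∀ (r' : R') (α β : Ω) (m : M),
        φ (mR' β (op (P' α r') • m)) =
          φ (mR' β (op r' • mR' α m)) + φ (op (P' α r') • mR' β m)
            + lam β • φ (op r' • mR' α m) + lam α • φ (op r' • mR' β m)) :=
  hom_from_bimodule_is_left_multiple_rota_baxter_module_general k R R' Ω lam P' M mR mR' hMr hcomp₁
    hcomp₂ hcomp₃ N nOp
end

section
/- Let (R',P'_Ω) and (R,P_Ω) be multiple Rota-Baxter algebras of pair weight (λ_Ω,λ_Ω). Let (M,𝔪^{R'}_Ω,𝔪^R_Ω) be an (R',P'_Ω)-(R,P_Ω)-bimodule and (N,𝔫^R_Ω) a right (R,P_Ω)-module. Then Hom_{(R,P_Ω)}(M,N) is a right (R',P'_Ω)-module, where the right R'-action is (φr')(m) := φ(r'm) and the operators are 𝔮_ω(φ)(m) := φ(𝔪^{R'}_ω(m)). In particular: (i) for every right (R,P_Ω)-module homomorphism φ : M → N and every r' ∈ R', ω ∈ Ω, the maps φr' and 𝔮_ω(φ) are again right (R,P_Ω)-module homomorphisms; and (ii) 𝔮_β(φ·P'_α(r'))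 = 𝔮_β(𝔮_α(φ)·r') + 𝔮_β(φ)·P'_α(r') + λ_β·𝔮_α(φ)·r' + λ_α·𝔮_β(φ)·r' for all r' ∈ R', α,β ∈ Ω. -/
/-! Precomposing a homomorphism of right `(R, P_Ω)`-modules with an `R`-linear map that commutes
with every `𝔪^R_ω` gives again such a homomorphism; by the bimodule axioms both `m ↦ r' • m` and
`𝔪^{R'}_ω` are such maps. The identity (ii) is the image under `φ` of the left
`(R', P'_Ω)`-module identity of `M`. -/

open Function

def semiconjLinearMaps (S : Type*) [Semiring S] {Ω M N F : Type*}
    [AddCommGroup M] [Module S M] [AddCommGroup N] [Module S N]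
    [FunLike F N N] [AddMonoidHomClass F N N] (f : Ω → M → M) (g : Ω → F) :
    AddSubgroup (M →ₗ[S] N) where
  carrier := {φ | ∀ ω, Semiconj φ (f ω) (g ω)}
  zero_mem' _ _ := (map_zero (g _)).symm
  add_mem' hφ hψ ω m := by simp only [LinearMap.add_apply, hφ ω m, hψ ω m, map_add]
  neg_mem' hφ ω m := by simp only [LinearMap.neg_apply, hφ ω m, map_neg]

open MulOpposite in
theorem hom_from_bimodule_is_right_multiple_rota_baxter_module_general
    (k : Type*) [CommRing k]
    (R : Type*) [Ring R] [Algebra k R]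
    (R' : Type*) [Ring R'] [Algebra k R']
    (Ω : Type*)
    (lam : Ω → k)
    (P' : Ω → R' →ₗ[k] R')
    -- `M` is an `(R', P'_Ω)`-`(R, P_Ω)`-bimodule
    (M : Type*) [AddCommGroup M] [Module k M] [Module R' M] [Module Rᵐᵒᵖ M]
    [IsScalarTower k Rᵐᵒᵖ M]
    [SMulCommClass R' Rᵐᵒᵖ M]
    (mR' : Ω → M →ₗ[k] M) (mR : Ω → M →ₗ[k] M)
    (hMl : ∀ (α β : Ω) (x : R') (m : M),
      P' α x • mR' β m =
        mR' α (x • mR' β m) + mR' β (P' α x • m)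
          + lam β • mR' α (x • m) + lam α • mR' β (x • m))
    (hcomp₁ : ∀ (ω : Ω) (r' : R') (m : M), mR ω (r' • m) = r' • mR ω m)
    (hcomp₂ : ∀ (ω : Ω) (r : R) (m : M), mR' ω (op r • m) = op r • mR' ω m)
    (hcomp₃ : ∀ (ω τ : Ω) (m : M), mR' ω (mR τ m) = mR τ (mR' ω m))
    -- `N` is a right `(R, P_Ω)`-module
    (N : Type*) [AddCommGroup N] [Module k N] [Module Rᵐᵒᵖ N] [IsScalarTower k Rᵐᵒᵖ N]
    (nOp : Ω → N →ₗ[k] N) :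
    -- the homomorphisms form an abelian subgroup of `Hom_R(M, N)`
    (∃ H : AddSubgroup (M →ₗ[Rᵐᵒᵖ] N),
      (H : Set (M →ₗ[Rᵐᵒᵖ] N)) =
        {φ : M →ₗ[Rᵐᵒᵖ] N | ∀ (ω : Ω) (m : M), φ (mR ω m) = nOp ω (φ m)}) ∧
    ∀ φ : M →ₗ[Rᵐᵒᵖ] N, (∀ (ω : Ω) (m : M), φ (mR ω m) = nOp ω (φ m)) →
      -- (i) `φ·r'`, with `(φ·r')(m) = φ(r'·m)`, is again a right `(R, P_Ω)`-module hom
      (∀ r' : R', ∃ ψ : M →ₗ[Rᵐᵒᵖ] N,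
        (∀ m : M, ψ m = φ (r' • m)) ∧
        ∀ (τ : Ω) (m : M), ψ (mR τ m) = nOp τ (ψ m)) ∧
      -- (i) `𝔮_ω(φ)`, with `𝔮_ω(φ)(m) = φ(𝔪^{R'}_ω(m))`, is again such a hom
      (∀ ω : Ω, ∃ ψ : M →ₗ[Rᵐᵒᵖ] N,
        (∀ m : M, ψ m = φ (mR' ω m)) ∧
        ∀ (τ : Ω) (m : M), ψ (mR τ m) = nOp τ (ψ m)) ∧
      -- (ii) the right multiple Rota-Baxter module identity for `𝔮_Ω`, pointwise
      (∀ (r' : R') (α β : Ω) (m : M),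
        φ (P' α r' • mR' β m) =
          φ (mR' α (r' • mR' β m)) + φ (mR' β (P' α r' • m))
            + lam β • φ (mR' α (r' • m)) + lam α • φ (mR' β (r' • m))) := by
  refine ⟨⟨semiconjLinearMaps Rᵐᵒᵖ (fun ω => mR ω) nOp, rfl⟩, fun φ hφ => ⟨?_, ?_, ?_⟩⟩
  · intro r'
    exact ⟨φ ∘ₗ DistribSMul.toLinearMap Rᵐᵒᵖ M r', fun _ => rfl,
      fun τ => Semiconj.comp_left (hφ τ) fun m => (hcomp₁ τ r' m).symm⟩
  · intro ω
    let mR'ω : M →ₗ[Rᵐᵒᵖ] M :=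
      { toAddHom := (mR' ω).toAddHom, map_smul' := fun x => hcomp₂ ω x.unop }
    exact ⟨φ ∘ₗ mR'ω, fun _ => rfl, fun τ => Semiconj.comp_left (hφ τ) (hcomp₃ ω τ)⟩
  · intro r' α β m
    rw [hMl, map_add, map_add, map_add, φ.map_smul_of_tower, φ.map_smul_of_tower]

open MulOpposite in
/-- If `(M, 𝔪^{R'}_Ω, 𝔪^R_Ω)` is an `(R', P'_Ω)`-`(R, P_Ω)`-bimodule
and `(N, 𝔫_Ω)` is a right `(R, P_Ω)`-module, then the set of right `(R, P_Ω)`-module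
homomorphisms `Hom_{(R,P_Ω)}(M, N)` is a right `(R', P'_Ω)`-module with action
`(φ·r')(m) := φ(r'·m)` and operators `𝔮_ω(φ)(m) := φ(𝔪^{R'}_ω(m))`; in particular
`φ·r'` and `𝔮_ω(φ)` are again right `(R, P_Ω)`-module homomorphisms, and the right
multiple Rota-Baxter module identity holds for the `𝔮_ω`. -/
theorem hom_from_bimodule_is_right_multiple_rota_baxter_module
    (k : Type*) [CommRing k]
    (R : Type*) [Ring R] [Algebra k R]
    (R' : Type*) [Ring R'] [Algebra k R']
    (Ω : Type*) [Nonempty Ω]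
    (lam : Ω → k)
    (P : Ω → R →ₗ[k] R)
    (hP : ∀ (α β : Ω) (r₁ r₂ : R),
      P α r₁ * P β r₂ =
        P α (r₁ * P β r₂) + P β (P α r₁ * r₂)
          + lam β • P α (r₁ * r₂) + lam α • P β (r₁ * r₂))
    (P' : Ω → R' →ₗ[k] R')
    (hP' : ∀ (α β : Ω) (r₁ r₂ : R'),
      P' α r₁ * P' β r₂ =
        P' α (r₁ * P' β r₂) + P' β (P' α r₁ * r₂)
          + lam β • P' α (r₁ * r₂) + lam α • P' β (r₁ * r₂))
    -- `M` is an `(R', P'_Ω)`-`(R, P_Ω)`-bimodule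
    (M : Type*) [AddCommGroup M] [Module k M] [Module R' M] [Module Rᵐᵒᵖ M]
    [IsScalarTower k R' M] [IsScalarTower k Rᵐᵒᵖ M]
    [SMulCommClass R' Rᵐᵒᵖ M] [SMulCommClass Rᵐᵒᵖ R' M]
    (mR' : Ω → M →ₗ[k] M) (mR : Ω → M →ₗ[k] M)
    (hMl : ∀ (α β : Ω) (x : R') (m : M),
      P' α x • mR' β m =
        mR' α (x • mR' β m) + mR' β (P' α x • m)
          + lam β • mR' α (x • m) + lam α • mR' β (x • m))
    (hMr : ∀ (α β : Ω) (x : R) (m : M),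
      mR β (op (P α x) • m) =
        mR β (op x • mR α m) + op (P α x) • mR β m
          + lam β • (op x • mR α m) + lam α • (op x • mR β m))
    (hcomp₁ : ∀ (ω : Ω) (r' : R') (m : M), mR ω (r' • m) = r' • mR ω m)
    (hcomp₂ : ∀ (ω : Ω) (r : R) (m : M), mR' ω (op r • m) = op r • mR' ω m)
    (hcomp₃ : ∀ (ω τ : Ω) (m : M), mR' ω (mR τ m) = mR τ (mR' ω m))
    -- `N` is a right `(R, P_Ω)`-module
    (N : Type*) [AddCommGroup N] [Module k N] [Module Rᵐᵒᵖ N] [IsScalarTower k Rᵐᵒᵖ N]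
    (nOp : Ω → N →ₗ[k] N)
    (hN : ∀ (α β : Ω) (x : R) (n : N),
      nOp β (op (P α x) • n) =
        nOp β (op x • nOp α n) + op (P α x) • nOp β n
          + lam β • (op x • nOp α n) + lam α • (op x • nOp β n)) :
    -- the homomorphisms form an abelian subgroup of `Hom_R(M, N)`
    (∃ H : AddSubgroup (M →ₗ[Rᵐᵒᵖ] N),
      (H : Set (M →ₗ[Rᵐᵒᵖ] N)) =
        {φ : M →ₗ[Rᵐᵒᵖ] N | ∀ (ω : Ω) (m : M), φ (mR ω m) = nOp ω (φ m)}) ∧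
    ∀ φ : M →ₗ[Rᵐᵒᵖ] N, (∀ (ω : Ω) (m : M), φ (mR ω m) = nOp ω (φ m)) →
      -- (i) `φ·r'`, with `(φ·r')(m) = φ(r'·m)`, is again a right `(R, P_Ω)`-module hom
      (∀ r' : R', ∃ ψ : M →ₗ[Rᵐᵒᵖ] N,
        (∀ m : M, ψ m = φ (r' • m)) ∧
        ∀ (τ : Ω) (m : M), ψ (mR τ m) = nOp τ (ψ m)) ∧
      -- (i) `𝔮_ω(φ)`, with `𝔮_ω(φ)(m) = φ(𝔪^{R'}_ω(m))`, is again such a hom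
      (∀ ω : Ω, ∃ ψ : M →ₗ[Rᵐᵒᵖ] N,
        (∀ m : M, ψ m = φ (mR' ω m)) ∧
        ∀ (τ : Ω) (m : M), ψ (mR τ m) = nOp τ (ψ m)) ∧
      -- (ii) the right multiple Rota-Baxter module identity for `𝔮_Ω`, pointwise
      (∀ (r' : R') (α β : Ω) (m : M),
        φ (P' α r' • mR' β m) =
          φ (mR' α (r' • mR' β m)) + φ (mR' β (P' α r' • m))
            + lam β • φ (mR' α (r' • m)) + lam α • φ (mR' β (r' • m))) :=
  hom_from_bimodule_is_right_multiple_rota_baxter_module_general k R R' Ω lam P' M mR' mR hMl hcomp₁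
    hcomp₂ hcomp₃ N nOp
end

section
/- Every projective left (R,P_Ω)-module is a direct summand of a free left (R,P_Ω)-module: if (M,𝔪_Ω) is a projective left (R,P_Ω)-module, then there exist a set X, a free left (R,P_Ω)-module (F,𝔭_Ω) on X, and left (R,P_Ω)-module homomorphisms ψ : M → F and φ : F → M with φ ∘ ψ = id_M. -/
universe u

/-!
A projective module is a retract of anything that maps onto it. The free left
`(R, P_Ω)`-module on the underlying set of `M` is built as a term model: formal expressions in
the variables, `+`, `0`, `r • _` and the operators `𝔪_ω`, modulo the module axioms, the
`k`-linearity of the operators and the Rota-Baxter identity. Evaluation at `id` maps it onto `M`,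
and projectivity lifts `id_M` through this surjection.
-/

namespace MRBModule

inductive FreeTerm (R Ω X : Type u) : Type u
  | var : X → FreeTerm R Ω X
  | zero : FreeTerm R Ω X
  | add : FreeTerm R Ω X → FreeTerm R Ω X → FreeTerm R Ω X
  | smul : R → FreeTerm R Ω X → FreeTerm R Ω X
  | op : Ω → FreeTerm R Ω X → FreeTerm R Ω X

variable {k R Ω : Type u} [CommRing k] [Ring R] [Algebra k R]

namespace FreeTerm

variable {X : Type u}

/-- One-step rewriting; the quotient by it is taken with `Quot`, which closes it up to an
equivalence relation, so only the congruence steps have to be listed. -/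
inductive Rel (lam : Ω → k) (P : Ω → R →ₗ[k] R) : FreeTerm R Ω X → FreeTerm R Ω X → Prop
  | add_left {a a'} (b) : Rel lam P a a' → Rel lam P (.add a b) (.add a' b)
  | add_right (a) {b b'} : Rel lam P b b' → Rel lam P (.add a b) (.add a b')
  | smul_congr (r) {a a'} : Rel lam P a a' → Rel lam P (.smul r a) (.smul r a')
  | op_congr (ω) {a a'} : Rel lam P a a' → Rel lam P (.op ω a) (.op ω a')
  | add_assoc (a b c) : Rel lam P (.add (.add a b) c) (.add a (.add b c))
  | add_comm (a b) : Rel lam P (.add a b) (.add b a)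
  | zero_add (a) : Rel lam P (.add .zero a) a
  | one_smul (a) : Rel lam P (.smul 1 a) a
  | mul_smul (r s a) : Rel lam P (.smul (r * s) a) (.smul r (.smul s a))
  | smul_add (r a b) : Rel lam P (.smul r (.add a b)) (.add (.smul r a) (.smul r b))
  | add_smul (r s a) : Rel lam P (.smul (r + s) a) (.add (.smul r a) (.smul s a))
  | zero_smul (a) : Rel lam P (.smul 0 a) .zero
  | smul_zero (r) : Rel lam P (.smul r .zero) .zero
  | op_add (ω a b) : Rel lam P (.op ω (.add a b)) (.add (.op ω a) (.op ω b))
  | op_algebraMap_smul (ω) (c : k) (a) :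
      Rel lam P (.op ω (.smul (algebraMap k R c) a)) (.smul (algebraMap k R c) (.op ω a))
  | rb (α β : Ω) (x : R) (m) :
      Rel lam P (.smul (P α x) (.op β m))
        (.add (.add (.add (.op α (.smul x (.op β m))) (.op β (.smul (P α x) m)))
            (.smul (algebraMap k R (lam β)) (.op α (.smul x m))))
          (.smul (algebraMap k R (lam α)) (.op β (.smul x m))))

end FreeTerm

variable (k) (lam : Ω → k) (P : Ω → R →ₗ[k] R) (X : Type u)

def FreeCarrier : Type u := Quot (FreeTerm.Rel (X := X) lam P)

variable {k lam P X}

namespace FreeCarrier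

def mk (a : FreeTerm R Ω X) : FreeCarrier k lam P X := Quot.mk _ a

open FreeTerm (Rel)

instance : Zero (FreeCarrier k lam P X) := ⟨mk .zero⟩

instance : Add (FreeCarrier k lam P X) :=
  ⟨Quot.map₂ .add (fun a _ _ h => Rel.add_right a h) (fun _ _ b h => Rel.add_left b h)⟩

instance : SMul R (FreeCarrier k lam P X) :=
  ⟨fun r => Quot.map (.smul r) fun _ _ h => Rel.smul_congr r h⟩

instance : AddCommMonoid (FreeCarrier k lam P X) where
  add_assoc a b c := by
    induction a using Quot.ind; induction b using Quot.ind; induction c using Quot.ind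
    exact Quot.sound (Rel.add_assoc _ _ _)
  add_comm a b := by
    induction a using Quot.ind; induction b using Quot.ind
    exact Quot.sound (Rel.add_comm _ _)
  zero_add a := by
    induction a using Quot.ind
    exact Quot.sound (Rel.zero_add _)
  add_zero a := by
    induction a using Quot.ind
    exact (Quot.sound (Rel.add_comm _ _)).trans (Quot.sound (Rel.zero_add _))
  nsmul := nsmulRec

instance : Module R (FreeCarrier k lam P X) where
  one_smul a := by induction a using Quot.ind; exact Quot.sound (Rel.one_smul _)
  mul_smul r s a := by induction a using Quot.ind; exact Quot.sound (Rel.mul_smul r s _)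
  smul_add r a b := by
    induction a using Quot.ind; induction b using Quot.ind
    exact Quot.sound (Rel.smul_add r _ _)
  smul_zero r := Quot.sound (Rel.smul_zero r)
  add_smul r s a := by induction a using Quot.ind; exact Quot.sound (Rel.add_smul r s _)
  zero_smul a := by induction a using Quot.ind; exact Quot.sound (Rel.zero_smul _)

instance : AddCommGroup (FreeCarrier k lam P X) := Module.addCommMonoidToAddCommGroup R

instance : Module k (FreeCarrier k lam P X) := Module.compHom _ (algebraMap k R)

instance : IsScalarTower k R (FreeCarrier k lam P X) :=
  ⟨fun c r a => by rw [Algebra.smul_def, mul_smul]; rfl⟩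

def op (ω : Ω) : FreeCarrier k lam P X →ₗ[k] FreeCarrier k lam P X where
  toFun := Quot.map (.op ω) fun _ _ h => Rel.op_congr ω h
  map_add' a b := by
    induction a using Quot.ind; induction b using Quot.ind
    exact Quot.sound (Rel.op_add ω _ _)
  map_smul' c a := by
    induction a using Quot.ind
    exact Quot.sound (Rel.op_algebraMap_smul ω c _)

end FreeCarrier

variable (k lam P X) in
abbrev free : MRBModule k R Ω lam P where
  carrier := FreeCarrier k lam P X
  op := FreeCarrier.op
  rb α β x m := by
    induction m using Quot.ind
    exact Quot.sound (FreeTerm.Rel.rb α β x _)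

def of (x : X) : (free k lam P X).carrier := FreeCarrier.mk (.var x)

variable (A : MRBModule k R Ω lam P) (f : X → A.carrier)

def FreeTerm.eval : FreeTerm R Ω X → A.carrier
  | .var x => f x
  | .zero => 0
  | .add a b => eval a + eval b
  | .smul r a => r • eval a
  | .op ω a => A.op ω (eval a)

theorem FreeTerm.eval_eq_of_rel {a b : FreeTerm R Ω X} (h : Rel lam P a b) :
    a.eval A f = b.eval A f := by
  induction h with
  | rb α β x m => simpa [eval, algebraMap_smul, add_assoc] using A.rb α β x (m.eval A f)
  | _ => simp_all [eval, add_assoc, add_comm, mul_smul, add_smul, algebraMap_smul]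

def lift : (free k lam P X).carrier →ₗ[R] A.carrier where
  toFun := Quot.lift (FreeTerm.eval A f) fun _ _ => FreeTerm.eval_eq_of_rel A f
  map_add' a b := by induction a using Quot.ind; induction b using Quot.ind; rfl
  map_smul' r a := by induction a using Quot.ind; rfl

theorem lift_of (x : X) : lift A f (of x) = f x := rfl

theorem lift_op (ω : Ω) (u : (free k lam P X).carrier) :
    lift A f ((free k lam P X).op ω u) = A.op ω (lift A f u) := by
  induction u using Quot.ind; rfl

theorem lift_surjective (hf : Function.Surjective f) : Function.Surjective (lift A f) := by
  intro a
  obtain ⟨x, rfl⟩ := hf a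
  exact ⟨of x, lift_of A f x⟩

variable {A} in
theorem hom_ext {g g' : (free k lam P X).carrier →ₗ[R] A.carrier}
    (hg : ∀ ω u, g ((free k lam P X).op ω u) = A.op ω (g u))
    (hg' : ∀ ω u, g' ((free k lam P X).op ω u) = A.op ω (g' u))
    (h : ∀ x : X, g (of x) = g' (of x)) : g = g' := by
  ext u
  induction u using Quot.ind with | _ a
  induction a with
  | var x => exact h x
  | zero => exact g.map_zero.trans g'.map_zero.symm
  | add a b iha ihb =>
    change g (.mk a + .mk b) = g' (.mk a + .mk b)
    rw [map_add, map_add]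
    exact congrArg₂ _ iha ihb
  | smul r a ih =>
    change g (r • .mk a) = g' (r • .mk a)
    rw [map_smul, map_smul]
    exact congrArg _ ih
  | op ω a ih =>
    change g ((free k lam P X).op ω (.mk a)) = g' ((free k lam P X).op ω (.mk a))
    rw [hg, hg']
    exact congrArg _ ih

theorem existsUnique_lift : ∃! g : (free k lam P X).carrier →ₗ[R] A.carrier,
    (∀ ω u, g ((free k lam P X).op ω u) = A.op ω (g u)) ∧ ∀ x, g (of x) = f x :=
  ⟨lift A f, ⟨lift_op A f, lift_of A f⟩, fun _ hg =>
    hom_ext hg.1 (lift_op A f) fun x => (hg.2 x).trans (lift_of A f x).symm⟩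

end MRBModule

theorem projective_multiple_rota_baxter_module_is_summand_of_free_general
    (k R Ω : Type u) [CommRing k] [Ring R] [Algebra k R]
    (lam : Ω → k)
    (P : Ω → R →ₗ[k] R)
    (M : MRBModule k R Ω lam P)
    (hproj : ∀ (A B : MRBModule k R Ω lam P)
      (θ : A.carrier →ₗ[R] B.carrier),
      (∀ (ω : Ω) (a : A.carrier), θ (A.op ω a) = B.op ω (θ a)) →
      Function.Surjective θ →
      ∀ φ : M.carrier →ₗ[R] B.carrier,
        (∀ (ω : Ω) (m : M.carrier), φ (M.op ω m) = B.op ω (φ m)) →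
        ∃ φbar : M.carrier →ₗ[R] A.carrier,
          (∀ (ω : Ω) (m : M.carrier), φbar (M.op ω m) = A.op ω (φbar m)) ∧
          ∀ m : M.carrier, θ (φbar m) = φ m) :
    ∃ (X : Type u) (F : MRBModule k R Ω lam P) (jX : X → F.carrier),
      (∀ (A : MRBModule k R Ω lam P) (f : X → A.carrier),
        ∃! f' : F.carrier →ₗ[R] A.carrier,
          (∀ (ω : Ω) (u : F.carrier), f' (F.op ω u) = A.op ω (f' u)) ∧
          ∀ x : X, f' (jX x) = f x) ∧
      ∃ (ψ : M.carrier →ₗ[R] F.carrier) (φ : F.carrier →ₗ[R] M.carrier),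
        (∀ (ω : Ω) (m : M.carrier), ψ (M.op ω m) = F.op ω (ψ m)) ∧
        (∀ (ω : Ω) (u : F.carrier), φ (F.op ω u) = M.op ω (φ u)) ∧
        ∀ m : M.carrier, φ (ψ m) = m := by
  obtain ⟨ψ, hψ_op, hψ⟩ := hproj (MRBModule.free k lam P M.carrier) M (MRBModule.lift M id)
    (MRBModule.lift_op M id) (MRBModule.lift_surjective M id Function.surjective_id)
    LinearMap.id fun _ _ => rfl
  exact ⟨M.carrier, MRBModule.free k lam P M.carrier, MRBModule.of,
    MRBModule.existsUnique_lift, ψ, MRBModule.lift M id, hψ_op, MRBModule.lift_op M id, hψ⟩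

/-- Every projective left `(R, P_Ω)`-module is a direct summand of a
free left `(R, P_Ω)`-module: if `(M, 𝔪_Ω)` is projective then there exist a set `X`, a
free left `(R, P_Ω)`-module `(F, 𝔭_Ω)` on `X`, and left `(R, P_Ω)`-module homomorphisms
`ψ : M → F`, `φ : F → M` with `φ ∘ ψ = id_M`. -/
theorem projective_multiple_rota_baxter_module_is_summand_of_free
    (k R Ω : Type u) [CommRing k] [Ring R] [Algebra k R] [Nonempty Ω]
    (lam : Ω → k)
    (P : Ω → R →ₗ[k] R)
    (hP : ∀ (α β : Ω) (r₁ r₂ : R),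
      P α r₁ * P β r₂ =
        P α (r₁ * P β r₂) + P β (P α r₁ * r₂)
          + lam β • P α (r₁ * r₂) + lam α • P β (r₁ * r₂))
    (M : MRBModule k R Ω lam P)
    (hproj : ∀ (A B : MRBModule k R Ω lam P)
      (θ : A.carrier →ₗ[R] B.carrier),
      (∀ (ω : Ω) (a : A.carrier), θ (A.op ω a) = B.op ω (θ a)) →
      Function.Surjective θ →
      ∀ φ : M.carrier →ₗ[R] B.carrier,
        (∀ (ω : Ω) (m : M.carrier), φ (M.op ω m) = B.op ω (φ m)) →
        ∃ φbar : M.carrier →ₗ[R] A.carrier,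
          (∀ (ω : Ω) (m : M.carrier), φbar (M.op ω m) = A.op ω (φbar m)) ∧
          ∀ m : M.carrier, θ (φbar m) = φ m) :
    ∃ (X : Type u) (F : MRBModule k R Ω lam P) (jX : X → F.carrier),
      (∀ (A : MRBModule k R Ω lam P) (f : X → A.carrier),
        ∃! f' : F.carrier →ₗ[R] A.carrier,
          (∀ (ω : Ω) (u : F.carrier), f' (F.op ω u) = A.op ω (f' u)) ∧
          ∀ x : X, f' (jX x) = f x) ∧
      ∃ (ψ : M.carrier →ₗ[R] F.carrier) (φ : F.carrier →ₗ[R] M.carrier),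
        (∀ (ω : Ω) (m : M.carrier), ψ (M.op ω m) = F.op ω (ψ m)) ∧
        (∀ (ω : Ω) (u : F.carrier), φ (F.op ω u) = M.op ω (φ u)) ∧
        ∀ m : M.carrier, φ (ψ m) = m :=
  projective_multiple_rota_baxter_module_is_summand_of_free_general k R Ω lam P M hproj
end

section
/- Let (M,𝔪_Ω) be a right (R,P_Ω)-module and (N,𝔫_Ω) a left (R,P_Ω)-module. Then a tensor product M⊗_{(R,P_Ω)}N exists: there are an abelian group T and an (R,P_Ω)-bilinear map ζ : M × N → T such that for every abelian group G and every (R,P_Ω)-bilinear map φ : M × N → G there is a unique additive group homomorphism φ̃ : T → G with φ̃ ∘ ζ = φ. -/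
universe u

open MulOpposite in
/-- For a right `(R, P_Ω)`-module `(M, 𝔪_Ω)` and a left
`(R, P_Ω)`-module `(N, 𝔫_Ω)`, the tensor product `M ⊗_{(R,P_Ω)} N` exists: an abelian
group `T` with an `(R, P_Ω)`-bilinear map `ζ : M × N → T` through which every
`(R, P_Ω)`-bilinear map into an abelian group factors uniquely. -/
theorem exists_tensor_product_of_multiple_rota_baxter_modules
    (k : Type u) [CommRing k]
    (R : Type u) [Ring R] [Algebra k R]
    (Ω : Type u) [Nonempty Ω]
    (lam : Ω → k)
    (P : Ω → R →ₗ[k] R)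
    (hP : ∀ (α β : Ω) (r₁ r₂ : R),
      P α r₁ * P β r₂ =
        P α (r₁ * P β r₂) + P β (P α r₁ * r₂)
          + lam β • P α (r₁ * r₂) + lam α • P β (r₁ * r₂))
    -- `M` is a right `(R, P_Ω)`-module
    (M : Type u) [AddCommGroup M] [Module k M] [Module Rᵐᵒᵖ M] [IsScalarTower k Rᵐᵒᵖ M]
    (mOp : Ω → M →ₗ[k] M)
    (hM : ∀ (α β : Ω) (x : R) (m : M),
      mOp β (op (P α x) • m) =
        mOp β (op x • mOp α m) + op (P α x) • mOp β m
          + lam β • (op x • mOp α m) + lam α • (op x • mOp β m))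
    -- `N` is a left `(R, P_Ω)`-module
    (N : Type u) [AddCommGroup N] [Module k N] [Module R N] [IsScalarTower k R N]
    (nOp : Ω → N →ₗ[k] N)
    (hN : ∀ (α β : Ω) (x : R) (n : N),
      P α x • nOp β n =
        nOp α (x • nOp β n) + nOp β (P α x • n)
          + lam β • nOp α (x • n) + lam α • nOp β (x • n)) :
    ∃ (T : AddCommGrpCat.{u}) (ζ : M → N → T),
      -- `ζ` is `(R, P_Ω)`-bilinear
      ((∀ (m₁ m₂ : M) (n : N), ζ (m₁ + m₂) n = ζ m₁ n + ζ m₂ n) ∧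
       (∀ (m : M) (n₁ n₂ : N), ζ m (n₁ + n₂) = ζ m n₁ + ζ m n₂) ∧
       (∀ (m : M) (r : R) (n : N), ζ (op r • m) n = ζ m (r • n)) ∧
       (∀ (ω : Ω) (m : M) (n : N), ζ (mOp ω m) n = ζ m (nOp ω n))) ∧
      -- universal property
      ∀ (G : AddCommGrpCat.{u}) (φ : M → N → G),
        ((∀ (m₁ m₂ : M) (n : N), φ (m₁ + m₂) n = φ m₁ n + φ m₂ n) ∧
         (∀ (m : M) (n₁ n₂ : N), φ m (n₁ + n₂) = φ m n₁ + φ m n₂) ∧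
         (∀ (m : M) (r : R) (n : N), φ (op r • m) n = φ m (r • n)) ∧
         (∀ (ω : Ω) (m : M) (n : N), φ (mOp ω m) n = φ m (nOp ω n))) →
        ∃! ψ : T →+ G, ∀ (m : M) (n : N), ψ (ζ m n) = φ m n := by
  classical
  set S : Set (FreeAbelianGroup (M × N)) :=
    {x | (∃ m₁ m₂ n, x = FreeAbelianGroup.of (m₁ + m₂, n)
            - FreeAbelianGroup.of (m₁, n) - FreeAbelianGroup.of (m₂, n)) ∨
         (∃ m n₁ n₂, x = FreeAbelianGroup.of (m, n₁ + n₂)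
            - FreeAbelianGroup.of (m, n₁) - FreeAbelianGroup.of (m, n₂)) ∨
         (∃ (m : M) (r : R) (n : N), x = FreeAbelianGroup.of (op r • m, n)
            - FreeAbelianGroup.of (m, r • n)) ∨
         (∃ ω m n, x = FreeAbelianGroup.of (mOp ω m, n)
            - FreeAbelianGroup.of (m, nOp ω n))} with hS
  set K : AddSubgroup (FreeAbelianGroup (M × N)) := AddSubgroup.closure S with hK
  have hmem : ∀ x ∈ S, ((x : FreeAbelianGroup (M × N) ⧸ K) = 0) := by
    intro x hx
    rw [QuotientAddGroup.eq_zero_iff]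
    exact AddSubgroup.subset_closure hx
  refine ⟨AddCommGrpCat.of (FreeAbelianGroup (M × N) ⧸ K),
    fun m n => ((FreeAbelianGroup.of (m, n) : FreeAbelianGroup (M × N)) :
      FreeAbelianGroup (M × N) ⧸ K), ⟨?_, ?_, ?_, ?_⟩, ?_⟩
  · intro m₁ m₂ n
    have h := hmem _ (Or.inl ⟨m₁, m₂, n, rfl⟩)
    rw [sub_sub, QuotientAddGroup.mk_sub, sub_eq_zero, QuotientAddGroup.mk_add] at h
    exact h
  · intro m n₁ n₂
    have h := hmem _ (Or.inr (Or.inl ⟨m, n₁, n₂, rfl⟩))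
    rw [sub_sub, QuotientAddGroup.mk_sub, sub_eq_zero, QuotientAddGroup.mk_add] at h
    exact h
  · intro m r n
    have h := hmem _ (Or.inr (Or.inr (Or.inl ⟨m, r, n, rfl⟩)))
    rw [QuotientAddGroup.mk_sub, sub_eq_zero] at h
    exact h
  · intro ω m n
    have h := hmem _ (Or.inr (Or.inr (Or.inr ⟨ω, m, n, rfl⟩)))
    rw [QuotientAddGroup.mk_sub, sub_eq_zero] at h
    exact h
  · intro G φ ⟨h1, h2, h3, h4⟩
    have hker : K ≤ (FreeAbelianGroup.lift (fun p : M × N => φ p.1 p.2)).ker := by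
      rw [hK, AddSubgroup.closure_le]
      rintro x (⟨m₁, m₂, n, rfl⟩ | ⟨m, n₁, n₂, rfl⟩ | ⟨m, r, n, rfl⟩ | ⟨ω, m, n, rfl⟩) <;>
        simp only [SetLike.mem_coe, AddMonoidHom.mem_ker, map_sub,
          FreeAbelianGroup.lift_apply_of]
      · rw [h1]; abel
      · rw [h2]; abel
      · rw [h3]; abel
      · rw [h4]; abel
    refine ⟨QuotientAddGroup.lift K (FreeAbelianGroup.lift (fun p : M × N => φ p.1 p.2))
      hker, fun m n => ?_, fun ψ hψ => ?_⟩
    · exact FreeAbelianGroup.lift_apply_of _ _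
    · refine AddMonoidHom.ext (fun x => ?_)
      refine QuotientAddGroup.induction_on x (fun y => ?_)
      refine FreeAbelianGroup.induction_on y ?_ (fun p => ?_) (fun p hp => ?_)
        (fun a b ha hb => ?_)
      · rw [QuotientAddGroup.mk_zero, map_zero, map_zero]
      · simpa [FreeAbelianGroup.lift_apply_of] using hψ p.1 p.2
      · rw [QuotientAddGroup.mk_neg, map_neg, map_neg, hp]
      · rw [QuotientAddGroup.mk_add, map_add, map_add, ha, hb]
end

section
/- Let (R,P_Ω) and (R',P'_Ω) be multiple Rota-Baxter algebras of pair weight (λ_Ω,λ_Ω), let (S,𝔰^R_Ω) be a left (R,P_Ω)-module, and let (M,𝔪^{R'}_Ω,𝔪^R_Ω) be an (R',P'_Ω)-(R,P_Ω)-bimodule. Let (T,ζ) be a tensor product M⊗_{(R,P_Ω)}S (an abelian group with an (R,P_Ω)-bilinear map ζ : M×S → T having the universal property for (R,P_Ω)-bilinear maps). Suppose T carries a left R'-module structure and additive operators 𝔮_ω : T → T (ω ∈ Ω) satisfying r'·ζ(m,s) = ζ(r'm,s) and 𝔮_ω(ζ(m,s)) = ζ(𝔪^{R'}_ω(m),s)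 for all r' ∈ R', m ∈ M, s ∈ S, ω ∈ Ω. Then (T,𝔮_Ω) is a left (R',P'_Ω)-module: P'_α(r')·𝔮_β(t) = 𝔮_α(r'·𝔮_β(t)) + 𝔮_β(P'_α(r')·t) + λ_β·𝔮_α(r'·t) + λ_α·𝔮_β(r'·t) for all r' ∈ R', t ∈ T, α,β ∈ Ω. -/
universe u

open MulOpposite in
/-- If `(S, 𝔰_Ω)` is a left `(R, P_Ω)`-module,
`(M, 𝔪^{R'}_Ω, 𝔪^R_Ω)` is an `(R', P'_Ω)`-`(R, P_Ω)`-bimodule, and `(T, ζ)` is a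
tensor product `M ⊗_{(R,P_Ω)} S` equipped with a left `R'`-module structure and
operators `𝔮_ω` satisfying `r'·(m ⊗ s) = (r'·m) ⊗ s` and `𝔮_ω(m ⊗ s) = 𝔪^{R'}_ω(m) ⊗ s`,
then `(T, 𝔮_Ω)` is a left `(R', P'_Ω)`-module. -/
theorem tensor_product_with_bimodule_is_left_multiple_rota_baxter_module
    (k : Type u) [CommRing k]
    (R : Type u) [Ring R] [Algebra k R]
    (R' : Type u) [Ring R'] [Algebra k R']
    (Ω : Type u) [Nonempty Ω]
    (lam : Ω → k)
    (P : Ω → R →ₗ[k] R)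
    (hP : ∀ (α β : Ω) (r₁ r₂ : R),
      P α r₁ * P β r₂ =
        P α (r₁ * P β r₂) + P β (P α r₁ * r₂)
          + lam β • P α (r₁ * r₂) + lam α • P β (r₁ * r₂))
    (P' : Ω → R' →ₗ[k] R')
    (hP' : ∀ (α β : Ω) (r₁ r₂ : R'),
      P' α r₁ * P' β r₂ =
        P' α (r₁ * P' β r₂) + P' β (P' α r₁ * r₂)
          + lam β • P' α (r₁ * r₂) + lam α • P' β (r₁ * r₂))
    -- `S` is a left `(R, P_Ω)`-module
    (S : Type u) [AddCommGroup S] [Module k S] [Module R S] [IsScalarTower k R S]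
    (sOp : Ω → S →ₗ[k] S)
    (hS : ∀ (α β : Ω) (x : R) (s : S),
      P α x • sOp β s =
        sOp α (x • sOp β s) + sOp β (P α x • s)
          + lam β • sOp α (x • s) + lam α • sOp β (x • s))
    -- `M` is an `(R', P'_Ω)`-`(R, P_Ω)`-bimodule
    (M : Type u) [AddCommGroup M] [Module k M] [Module R' M] [Module Rᵐᵒᵖ M]
    [IsScalarTower k R' M] [IsScalarTower k Rᵐᵒᵖ M]
    [SMulCommClass R' Rᵐᵒᵖ M] [SMulCommClass Rᵐᵒᵖ R' M]
    (mR' : Ω → M →ₗ[k] M) (mR : Ω → M →ₗ[k] M)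
    (hMl : ∀ (α β : Ω) (x : R') (m : M),
      P' α x • mR' β m =
        mR' α (x • mR' β m) + mR' β (P' α x • m)
          + lam β • mR' α (x • m) + lam α • mR' β (x • m))
    (hMr : ∀ (α β : Ω) (x : R) (m : M),
      mR β (op (P α x) • m) =
        mR β (op x • mR α m) + op (P α x) • mR β m
          + lam β • (op x • mR α m) + lam α • (op x • mR β m))
    (hcomp₁ : ∀ (ω : Ω) (r' : R') (m : M), mR ω (r' • m) = r' • mR ω m)
    (hcomp₂ : ∀ (ω : Ω) (r : R) (m : M), mR' ω (op r • m) = op r • mR' ω m)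
    (hcomp₃ : ∀ (ω τ : Ω) (m : M), mR' ω (mR τ m) = mR τ (mR' ω m))
    -- `(T, ζ)` is the tensor product `M ⊗_{(R,P_Ω)} S`
    (T : Type u) [AddCommGroup T] [Module k T] [Module R' T] [IsScalarTower k R' T]
    (ζ : M → S → T)
    (hζadd₁ : ∀ (m₁ m₂ : M) (s : S), ζ (m₁ + m₂) s = ζ m₁ s + ζ m₂ s)
    (hζadd₂ : ∀ (m : M) (s₁ s₂ : S), ζ m (s₁ + s₂) = ζ m s₁ + ζ m s₂)
    (hζr : ∀ (m : M) (r : R) (s : S), ζ (op r • m) s = ζ m (r • s))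
    (hζop : ∀ (ω : Ω) (m : M) (s : S), ζ (mR ω m) s = ζ m (sOp ω s))
    (huniv : ∀ (G : AddCommGrpCat.{u}) (φ : M → S → G),
      ((∀ (m₁ m₂ : M) (s : S), φ (m₁ + m₂) s = φ m₁ s + φ m₂ s) ∧
       (∀ (m : M) (s₁ s₂ : S), φ m (s₁ + s₂) = φ m s₁ + φ m s₂) ∧
       (∀ (m : M) (r : R) (s : S), φ (op r • m) s = φ m (r • s)) ∧
       (∀ (ω : Ω) (m : M) (s : S), φ (mR ω m) s = φ m (sOp ω s))) →
      ∃! ψ : T →+ G, ∀ (m : M) (s : S), ψ (ζ m s) = φ m s)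
    -- left `R'`-action and operators `𝔮_Ω` on `T`
    (q : Ω → T →+ T)
    (hact : ∀ (r' : R') (m : M) (s : S), r' • ζ m s = ζ (r' • m) s)
    (hkact : ∀ (c : k) (m : M) (s : S), c • ζ m s = ζ (c • m) s)
    (hq : ∀ (ω : Ω) (m : M) (s : S), q ω (ζ m s) = ζ (mR' ω m) s) :
    ∀ (α β : Ω) (r' : R') (t : T),
      P' α r' • q β t =
        q α (r' • q β t) + q β (P' α r' • t)
          + lam β • q α (r' • t) + lam α • q β (r' • t) := by

  intro α β r' t
  -- The difference of the two sides, as an additive homomorphism `T →+ T`.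
  set Ψ : T →+ T := AddMonoidHom.mk'
    (fun t => P' α r' • q β t - q α (r' • q β t) - q β (P' α r' • t)
      - lam β • q α (r' • t) - lam α • q β (r' • t))
    (by
      intro a b
      simp only [map_add, smul_add]
      abel) with hΨ
  have hΨζ : ∀ (m : M) (s : S), Ψ (ζ m s) = 0 := by
    intro m s
    have key := hMl α β r' m
    have : ζ (P' α r' • mR' β m) s
        = ζ (mR' α (r' • mR' β m)) s + ζ (mR' β (P' α r' • m)) s
          + ζ (lam β • mR' α (r' • m)) s + ζ (lam α • mR' β (r' • m)) s := by
      rw [← hζadd₁, ← hζadd₁, ← hζadd₁, key]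
    simp only [hΨ, AddMonoidHom.mk'_apply, hq, hact, hkact, this]
    abel
  -- Use uniqueness in the universal property applied to the zero map.
  obtain ⟨ψ, -, huniq⟩ := huniv (AddCommGrpCat.of T) (fun _ _ => (0 : T))
    ⟨by simp, by simp, by simp, by simp⟩
  have h1 : Ψ = ψ := huniq Ψ hΨζ
  have h2 : (0 : T →+ T) = ψ := huniq 0 (fun _ _ => rfl)
  have hΨ0 : Ψ = 0 := h1.trans h2.symm
  have := congrArg (fun f => (f : T →+ T) t) hΨ0
  simp only [hΨ, AddMonoidHom.mk'_apply, AddMonoidHom.zero_apply] at this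
  have h3 : P' α r' • q β t
      = q α (r' • q β t) + q β (P' α r' • t) + lam β • q α (r' • t)
        + lam α • q β (r' • t) := by
    have := this
    linear_combination (norm := (push_cast; abel)) this
  exact h3
end

section
/- Let (R,P_Ω) and (R',P'_Ω) be multiple Rota-Baxter algebras of pair weight (λ_Ω,λ_Ω). Let (M,𝔪^R_Ω) be a right (R,P_Ω)-module, (S,𝔰^R_Ω,𝔰^{R'}_Ω) an (R,P_Ω)-(R',P'_Ω)-bimodule, and (T,𝔱^{R'}_Ω) a right (R',P'_Ω)-module. Let (T₀,ζ) be a tensor product M⊗_{(R,P_Ω)}S, equipped with a right R'-module structure and additive operators 𝔮_ω : T₀ → T₀ satisfying ζ(m,s)·r' = ζ(m,sr') and 𝔮_ω(ζ(m,s)) = ζ(m,𝔰^{R'}_ω(s)), making (T₀,𝔮_Ω) a right (R',P'_Ω)-module. Endow Hom_{(R',P'_Ω)}(S,T) with the right (R,P_Ω)-module structure given by (φ·r)(s) := φ(rs) and operators 𝔥_ω(φ)(s) := φ(𝔰^R_ω(s)). Then the map θ sending a right (R',P'_Ω)-module homomorphism f : T₀ → T to the map θ(f) : M → Hom_{(R',P'_Ω)}(S,T),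 θ(f)(m)(s) := f(ζ(m,s)), is a bijection (an isomorphism of abelian groups) from Hom_{(R',P'_Ω)}(T₀,T) onto Hom_{(R,P_Ω)}(M,Hom_{(R',P'_Ω)}(S,T)), with inverse θ'(g)(ζ(m,s)) := g(m)(s). -/
universe u

open MulOpposite in
/-- Tensor–Hom adjunction for multiple Rota-Baxter modules: for a
right `(R, P_Ω)`-module `M`, an `(R, P_Ω)`-`(R', P'_Ω)`-bimodule `S`, a right
`(R', P'_Ω)`-module `T`, and a tensor product `T₀ = M ⊗_{(R,P_Ω)} S` endowed with its
right `(R', P'_Ω)`-module structure, the map `θ(f)(m)(s) := f(ζ(m, s))` is a bijection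
`Hom_{(R',P'_Ω)}(M ⊗_{(R,P_Ω)} S, T) ≅ Hom_{(R,P_Ω)}(M, Hom_{(R',P'_Ω)}(S, T))`,
with inverse `θ'(g)(ζ(m, s)) := g(m)(s)`. -/
theorem tensor_hom_adjunction_multiple_rota_baxter
    (k : Type u) [CommRing k]
    (R : Type u) [Ring R] [Algebra k R]
    (R' : Type u) [Ring R'] [Algebra k R']
    (Ω : Type u) [Nonempty Ω]
    (lam : Ω → k)
    (P : Ω → R →ₗ[k] R)
    (hP : ∀ (α β : Ω) (r₁ r₂ : R),
      P α r₁ * P β r₂ =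
        P α (r₁ * P β r₂) + P β (P α r₁ * r₂)
          + lam β • P α (r₁ * r₂) + lam α • P β (r₁ * r₂))
    (P' : Ω → R' →ₗ[k] R')
    (hP' : ∀ (α β : Ω) (r₁ r₂ : R'),
      P' α r₁ * P' β r₂ =
        P' α (r₁ * P' β r₂) + P' β (P' α r₁ * r₂)
          + lam β • P' α (r₁ * r₂) + lam α • P' β (r₁ * r₂))
    -- `M` is a right `(R, P_Ω)`-module
    (M : Type u) [AddCommGroup M] [Module k M] [Module Rᵐᵒᵖ M] [IsScalarTower k Rᵐᵒᵖ M]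
    (mR : Ω → M →ₗ[k] M)
    (hM : ∀ (α β : Ω) (x : R) (m : M),
      mR β (op (P α x) • m) =
        mR β (op x • mR α m) + op (P α x) • mR β m
          + lam β • (op x • mR α m) + lam α • (op x • mR β m))
    -- `S` is an `(R, P_Ω)`-`(R', P'_Ω)`-bimodule
    (S : Type u) [AddCommGroup S] [Module k S] [Module R S] [Module R'ᵐᵒᵖ S]
    [IsScalarTower k R S] [IsScalarTower k R'ᵐᵒᵖ S]
    [SMulCommClass R R'ᵐᵒᵖ S] [SMulCommClass R'ᵐᵒᵖ R S]
    (sR : Ω → S →ₗ[k] S) (sR' : Ω → S →ₗ[k] S)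
    (hSl : ∀ (α β : Ω) (x : R) (s : S),
      P α x • sR β s =
        sR α (x • sR β s) + sR β (P α x • s)
          + lam β • sR α (x • s) + lam α • sR β (x • s))
    (hSr : ∀ (α β : Ω) (x : R') (s : S),
      sR' β (op (P' α x) • s) =
        sR' β (op x • sR' α s) + op (P' α x) • sR' β s
          + lam β • (op x • sR' α s) + lam α • (op x • sR' β s))
    (hcomp₁ : ∀ (ω : Ω) (r : R) (s : S), sR' ω (r • s) = r • sR' ω s)
    (hcomp₂ : ∀ (ω : Ω) (r' : R') (s : S), sR ω (op r' • s) = op r' • sR ω s)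
    (hcomp₃ : ∀ (ω τ : Ω) (s : S), sR' ω (sR τ s) = sR τ (sR' ω s))
    -- `T` is a right `(R', P'_Ω)`-module
    (T : Type u) [AddCommGroup T] [Module k T] [Module R'ᵐᵒᵖ T] [IsScalarTower k R'ᵐᵒᵖ T]
    (tR' : Ω → T →ₗ[k] T)
    (hT : ∀ (α β : Ω) (x : R') (t : T),
      tR' β (op (P' α x) • t) =
        tR' β (op x • tR' α t) + op (P' α x) • tR' β t
          + lam β • (op x • tR' α t) + lam α • (op x • tR' β t))
    -- `(T₀, ζ)` is the tensor product `M ⊗_{(R,P_Ω)} S`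
    (T₀ : Type u) [AddCommGroup T₀] [Module k T₀] [Module R'ᵐᵒᵖ T₀]
    [IsScalarTower k R'ᵐᵒᵖ T₀]
    (ζ : M → S → T₀)
    (hζadd₁ : ∀ (m₁ m₂ : M) (s : S), ζ (m₁ + m₂) s = ζ m₁ s + ζ m₂ s)
    (hζadd₂ : ∀ (m : M) (s₁ s₂ : S), ζ m (s₁ + s₂) = ζ m s₁ + ζ m s₂)
    (hζbil : ∀ (m : M) (r : R) (s : S), ζ (op r • m) s = ζ m (r • s))
    (hζop : ∀ (ω : Ω) (m : M) (s : S), ζ (mR ω m) s = ζ m (sR ω s))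
    (huniv : ∀ (G : AddCommGrpCat.{u}) (φ : M → S → G),
      ((∀ (m₁ m₂ : M) (s : S), φ (m₁ + m₂) s = φ m₁ s + φ m₂ s) ∧
       (∀ (m : M) (s₁ s₂ : S), φ m (s₁ + s₂) = φ m s₁ + φ m s₂) ∧
       (∀ (m : M) (r : R) (s : S), φ (op r • m) s = φ m (r • s)) ∧
       (∀ (ω : Ω) (m : M) (s : S), φ (mR ω m) s = φ m (sR ω s))) →
      ∃! ψ : T₀ →+ G, ∀ (m : M) (s : S), ψ (ζ m s) = φ m s)
    -- right `(R', P'_Ω)`-module structure `(T₀, 𝔮_Ω)`, induced from `S`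
    (q : Ω → T₀ →+ T₀)
    (hζr' : ∀ (r' : R') (m : M) (s : S), op r' • ζ m s = ζ m (op r' • s))
    (hζk : ∀ (c : k) (m : M) (s : S), c • ζ m s = ζ m (c • s))
    (hq : ∀ (ω : Ω) (m : M) (s : S), q ω (ζ m s) = ζ m (sR' ω s))
    (hT₀ : ∀ (α β : Ω) (x : R') (t : T₀),
      q β (op (P' α x) • t) =
        q β (op x • q α t) + op (P' α x) • q β t
          + lam β • (op x • q α t) + lam α • (op x • q β t)) :
    -- (1) `θ` maps `Hom_{(R',P'_Ω)}(T₀, T)` into `Hom_{(R,P_Ω)}(M, Hom_{(R',P'_Ω)}(S, T))`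
    (∀ f : T₀ →ₗ[R'ᵐᵒᵖ] T, (∀ (ω : Ω) (t : T₀), f (q ω t) = tR' ω (f t)) →
      ((∀ (m₁ m₂ : M) (s : S), f (ζ (m₁ + m₂) s) = f (ζ m₁ s) + f (ζ m₂ s)) ∧
       (∀ (m : M) (s₁ s₂ : S), f (ζ m (s₁ + s₂)) = f (ζ m s₁) + f (ζ m s₂)) ∧
       -- each `θ(f)(m)` is right `R'`-linear and commutes with the operators,
       -- i.e. `θ(f)(m) ∈ Hom_{(R',P'_Ω)}(S, T)`
       (∀ (m : M) (r' : R') (s : S), f (ζ m (op r' • s)) = op r' • f (ζ m s)) ∧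
       (∀ (m : M) (ω : Ω) (s : S), f (ζ m (sR' ω s)) = tR' ω (f (ζ m s))) ∧
       -- `θ(f)` is right `R`-linear for the action `(φ·r)(s) = φ(r·s)` on `Hom(S, T)`
       (∀ (r : R) (m : M) (s : S), f (ζ (op r • m) s) = f (ζ m (r • s))) ∧
       -- `θ(f)` intertwines `𝔪_Ω` with the operators `𝔥_ω(φ)(s) = φ(𝔰^R_ω(s))`
       (∀ (ω : Ω) (m : M) (s : S), f (ζ (mR ω m) s) = f (ζ m (sR ω s))))) ∧
    -- (2) `θ` is bijective onto `Hom_{(R,P_Ω)}(M, Hom_{(R',P'_Ω)}(S, T))`,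
    -- with inverse `θ'(g)(ζ(m, s)) = g(m)(s)`
    (∀ g : M → S → T,
      ((∀ (m₁ m₂ : M) (s : S), g (m₁ + m₂) s = g m₁ s + g m₂ s) ∧
       (∀ (m : M) (s₁ s₂ : S), g m (s₁ + s₂) = g m s₁ + g m s₂) ∧
       (∀ (m : M) (r' : R') (s : S), g m (op r' • s) = op r' • g m s) ∧
       (∀ (m : M) (ω : Ω) (s : S), g m (sR' ω s) = tR' ω (g m s)) ∧
       (∀ (r : R) (m : M) (s : S), g (op r • m) s = g m (r • s)) ∧
       (∀ (ω : Ω) (m : M) (s : S), g (mR ω m) s = g m (sR ω s))) →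
      ∃! f : T₀ →ₗ[R'ᵐᵒᵖ] T,
        (∀ (ω : Ω) (t : T₀), f (q ω t) = tR' ω (f t)) ∧
        ∀ (m : M) (s : S), f (ζ m s) = g m s) := by
  constructor
  · intro f hf
    refine ⟨?_, ?_, ?_, ?_, ?_, ?_⟩
    · intro m₁ m₂ s; rw [hζadd₁]; exact f.map_add _ _
    · intro m s₁ s₂; rw [hζadd₂]; exact f.map_add _ _
    · intro m r' s; rw [← hζr', f.map_smul]
    · intro m ω s; rw [← hq, hf]
    · intro r m s; rw [hζbil]
    · intro ω m s; rw [hζop]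
  · rintro g ⟨hg1, hg2, hg3, hg4, hg5, hg6⟩
    -- uniqueness principle for additive maps out of T₀, with target T
    have key : ∀ (φ : M → S → T),
        ((∀ (m₁ m₂ : M) (s : S), φ (m₁ + m₂) s = φ m₁ s + φ m₂ s) ∧
         (∀ (m : M) (s₁ s₂ : S), φ m (s₁ + s₂) = φ m s₁ + φ m s₂) ∧
         (∀ (m : M) (r : R) (s : S), φ (op r • m) s = φ m (r • s)) ∧
         (∀ (ω : Ω) (m : M) (s : S), φ (mR ω m) s = φ m (sR ω s))) →
        ∀ (χ₁ χ₂ : T₀ →+ T),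
          (∀ m s, χ₁ (ζ m s) = φ m s) → (∀ m s, χ₂ (ζ m s) = φ m s) → χ₁ = χ₂ := by
      intro φ hφ χ₁ χ₂ h1 h2
      obtain ⟨ψ, hψ, hψuniq⟩ := huniv (AddCommGrpCat.of T) φ hφ
      exact (hψuniq χ₁ h1).trans (hψuniq χ₂ h2).symm
    obtain ⟨ψ₀, hψ₀, -⟩ := huniv (AddCommGrpCat.of T) g
      ⟨hg1, hg2, fun m r s => hg5 r m s, hg6⟩
    set ψ : T₀ →+ T := AddMonoidHom.mk' (fun t => ψ₀ t) (fun a b => ψ₀.map_add a b) with hψdef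
    have hψ : ∀ (m : M) (s : S), ψ (ζ m s) = g m s := fun m s => hψ₀ m s
    have hsmul : ∀ (r' : R') (t : T₀), ψ (op r' • t) = op r' • ψ t := by
      intro r'
      have e := key (fun m s => op r' • g m s)
        ⟨fun m₁ m₂ s => by simp only [hg1, smul_add],
         fun m s₁ s₂ => by simp only [hg2, smul_add],
         fun m r s => by simp only [hg5],
         fun ω m s => by simp only [hg6]⟩
        (ψ.comp (DistribMulAction.toAddMonoidHom T₀ (op r' : R'ᵐᵒᵖ)))
        ((DistribMulAction.toAddMonoidHom T (op r' : R'ᵐᵒᵖ)).comp ψ)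
        (fun m s => by
          simp only [AddMonoidHom.comp_apply, DistribMulAction.toAddMonoidHom_apply]
          rw [hζr', hψ, hg3])
        (fun m s => by
          simp only [AddMonoidHom.comp_apply, DistribMulAction.toAddMonoidHom_apply]
          rw [hψ])
      intro t
      exact congrArg (fun h => h t) e
    have hqcomm : ∀ (ω : Ω) (t : T₀), ψ (q ω t) = tR' ω (ψ t) := by
      intro ω
      have e := key (fun m s => tR' ω (g m s))
        ⟨fun m₁ m₂ s => by simp only [hg1, map_add],
         fun m s₁ s₂ => by simp only [hg2, map_add],
         fun m r s => by simp only [hg5],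
         fun ω' m s => by simp only [hg6]⟩
        (ψ.comp (q ω)) ((tR' ω).toAddMonoidHom.comp ψ)
        (fun m s => by
          simp only [AddMonoidHom.comp_apply]
          rw [hq, hψ, hg4])
        (fun m s => by
          simp only [AddMonoidHom.comp_apply, LinearMap.toAddMonoidHom_coe]
          rw [hψ])
      intro t
      exact congrArg (fun h => h t) e
    refine ⟨{ toFun := ψ, map_add' := ψ.map_add,
              map_smul' := fun c t => by
                induction c using MulOpposite.rec' with
                | h r' => exact hsmul r' t }, ⟨hqcomm, hψ⟩, ?_⟩
    rintro f' ⟨hf'q, hf'ζ⟩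
    have e := key g ⟨hg1, hg2, fun m r s => hg5 r m s, hg6⟩
      f'.toAddMonoidHom ψ hf'ζ hψ
    ext t
    exact congrArg (fun h => h t) e
end
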